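/- arXiv:0907.1583 — 5 statements merged into one kernel-verified Lean document; each statement's English description precedes it below -/
import Mathlib

section
/- Let a_1 ≥ a_2 ≥ ... ≥ a_n and b_1 ≥ b_2 ≥ ... ≥ b_m be sequences of positive integers with a_1 ≤ m, Σ a_i = Σ b_i, and b_1 ≤ b_m + 1. Then there exists a simple bipartite graph with parts u_1,...,u_n and v_1,...,v_m such that deg(u_i) = a_i for all i and deg(v_j) = b_j for all j. -/
open SimpleGraph

/-- Degree of a vertex, stated without decidability assumptions. -/
noncomputable def SimpleGraph.degN {V : Type*} (G : SimpleGraph V) (v : V) : ℕ :=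
  {w | G.Adj v w}.ncard

/-- The degree sequence of a finite graph, as a multiset. -/
noncomputable def SimpleGraph.degSeq {V : Type*} [Fintype V] (G : SimpleGraph V) : Multiset ℕ :=
  Finset.univ.val.map G.degN

/-- The chromatic number of a graph as a natural number. -/
noncomputable def SimpleGraph.chromNum {V : Type*} (G : SimpleGraph V) : ℕ :=
  G.chromaticNumber.toNat

/-- The maximum chromatic number over all realizations of a degree sequence. -/
noncomputable def maxChi (D : Multiset ℕ) : ℕ :=
  sSup {c | ∃ G : SimpleGraph (Fin (Multiset.card D)), G.degSeq = D ∧ c = G.chromNum}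

/-- The maximum clique number over all realizations of a degree sequence. -/
noncomputable def maxOmega (D : Multiset ℕ) : ℕ :=
  sSup {c | ∃ G : SimpleGraph (Fin (Multiset.card D)), G.degSeq = D ∧ c = G.cliqueNum}


lemma count_mod (M j : ℕ) (hj : j < M) (S : ℕ) :
    ((Finset.range S).filter (fun x => x % M = j)).card
      = S / M + if j < S % M then 1 else 0 := by
  have hM : 0 < M := lt_of_le_of_lt (Nat.zero_le j) hj
  induction S with
  | zero => simp
  | succ S ih =>
    have hr : S % M < M := Nat.mod_lt _ hM
    have hnot : S ∉ Finset.range S := by simp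
    rw [Finset.range_add_one, Finset.filter_insert]
    by_cases hc : S % M + 1 = M
    · have he : S + 1 = M * (S / M + 1) := by
        rw [mul_add_one]
        have := Nat.div_add_mod S M; omega
      have h1 : (S + 1) % M = 0 := by rw [he]; exact Nat.mul_mod_right _ _
      have h2 : (S + 1) / M = S / M + 1 := by
        rw [he]; exact Nat.mul_div_cancel_left _ hM
      by_cases hje : S % M = j
      · rw [if_pos hje, Finset.card_insert_of_notMem (by simp), ih, h1, h2]
        split_ifs <;> omega
      · rw [if_neg hje, ih, h1, h2]
        split_ifs <;> omega
    · have he : S + 1 = M * (S / M) + (S % M + 1) := by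
        have := Nat.div_add_mod S M; omega
      have h1 : (S + 1) % M = S % M + 1 := by
        have h := Nat.mul_add_mod M (S / M) (S % M + 1)
        rw [← he] at h
        rw [h]; exact Nat.mod_eq_of_lt (by omega)
      have h2 : (S + 1) / M = S / M := by
        have h := Nat.mul_add_div hM (S / M) (S % M + 1)
        rw [← he] at h
        have h0 : (S % M + 1) / M = 0 := Nat.div_eq_of_lt (by omega)
        omega
      by_cases hje : S % M = j
      · rw [if_pos hje, Finset.card_insert_of_notMem (by simp), ih, h1, h2]
        split_ifs <;> omega
      · rw [if_neg hje, ih, h1, h2]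
        split_ifs <;> omega

lemma partition_count (T : ℕ → ℕ) (hT : ∀ i, T i ≤ T (i + 1)) (p : ℕ → Prop)
    [DecidablePred p] (N : ℕ) :
    ∑ i ∈ Finset.range N, ((Finset.Ico (T i) (T (i + 1))).filter p).card
      = ((Finset.Ico (T 0) (T N)).filter p).card := by
  induction N with
  | zero => simp
  | succ N ih =>
    have h0N : T 0 ≤ T N := by
      clear ih
      induction N with
      | zero => exact le_refl _
      | succ k ihk => exact ihk.trans (hT k)
    rw [Finset.sum_range_succ, ih, ← Finset.Ico_union_Ico_eq_Ico h0N (hT N),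
      Finset.filter_union,
      Finset.card_union_of_disjoint
        (Finset.disjoint_filter_filter (Finset.Ico_disjoint_Ico_consecutive _ _ _))]

lemma residue_card (M j t len : ℕ) (hlen : len ≤ M) :
    ((Finset.Ico t (t + len)).filter (fun x => x % M = j)).card
      = if ∃ x ∈ Finset.Ico t (t + len), x % M = j then 1 else 0 := by
  split_ifs with h
  · obtain ⟨x, hx, hxm⟩ := h
    refine le_antisymm (Finset.card_le_one.mpr ?_) ?_
    · intro u hu v hv
      simp only [Finset.mem_filter, Finset.mem_Ico] at hu hv
      rcases le_total u v with huv | huv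
      · have hd : M ∣ v - u := (Nat.modEq_iff_dvd' huv).mp (by
          unfold Nat.ModEq; omega)
        have := Nat.eq_zero_of_dvd_of_lt hd
        omega
      · have hd : M ∣ u - v := (Nat.modEq_iff_dvd' huv).mp (by
          unfold Nat.ModEq; omega)
        have := Nat.eq_zero_of_dvd_of_lt hd
        omega
    · refine Finset.Nonempty.card_pos ⟨x, ?_⟩
      simp only [Finset.mem_filter]
      exact ⟨hx, hxm⟩
  · push_neg at h
    rw [Finset.card_eq_zero, Finset.filter_eq_empty_iff]
    exact h

lemma eq_of_mem_Ico_mod_eq {M t len x y : ℕ} (hlen : len ≤ M)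
    (hx : x ∈ Finset.Ico t (t + len)) (hy : y ∈ Finset.Ico t (t + len))
    (h : x % M = y % M) : x = y := by
  simp only [Finset.mem_Ico] at hx hy
  rcases le_total x y with hxy | hxy
  · have hd : M ∣ y - x := (Nat.modEq_iff_dvd' hxy).mp h
    have := Nat.eq_zero_of_dvd_of_lt hd
    omega
  · have hd : M ∣ x - y := (Nat.modEq_iff_dvd' hxy).mp h.symm
    have := Nat.eq_zero_of_dvd_of_lt hd
    omega

theorem bipartite_realization (n m : ℕ) (a : Fin (n + 1) → ℕ) (b : Fin (m + 1) → ℕ)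
    (ha : Antitone a) (hb : Antitone b)
    (hap : ∀ i, 0 < a i) (hbp : ∀ j, 0 < b j)
    (ha1 : a 0 ≤ m + 1)
    (hsum : ∑ i, a i = ∑ j, b j)
    (hb1 : b 0 ≤ b (Fin.last m) + 1) :
    ∃ G : SimpleGraph (Fin (n + 1) ⊕ Fin (m + 1)),
      (∀ i j, ¬ G.Adj (Sum.inl i) (Sum.inl j)) ∧
      (∀ i j, ¬ G.Adj (Sum.inr i) (Sum.inr j)) ∧
      (∀ i, G.degN (Sum.inl i) = a i) ∧
      (∀ j, G.degN (Sum.inr j) = b j) := by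
  classical
  set A : ℕ → ℕ := fun k => if h : k < n + 1 then a ⟨k, h⟩ else 0 with hAdef
  set T : ℕ → ℕ := fun i => ∑ k ∈ Finset.range i, A k with hTdef
  set P : Fin (n + 1) → Fin (m + 1) → Prop :=
    fun i j => ∃ x ∈ Finset.Ico (T (i : ℕ)) (T (i : ℕ) + a i), x % (m + 1) = (j : ℕ) with hPdef
  set g : ℕ → Fin (m + 1) := fun x => ⟨x % (m + 1), Nat.mod_lt x (Nat.succ_pos m)⟩ with hgdef
  -- basic facts
  have haM : ∀ i, a i ≤ m + 1 := fun i => le_trans (ha (Fin.zero_le i)) ha1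
  have hAa : ∀ i : Fin (n + 1), A (i : ℕ) = a i := by
    intro i
    simp [hAdef, i.isLt]
    intro h; have := i.isLt; omega
  have hTsucc : ∀ k : ℕ, T (k + 1) = T k + A k := by
    intro k
    simp [hTdef, Finset.sum_range_succ]
  have hTmono : ∀ k : ℕ, T k ≤ T (k + 1) := by
    intro k; rw [hTsucc]; exact Nat.le_add_right _ _
  have hT0 : T 0 = 0 := by simp [hTdef]
  have hTS : T (n + 1) = ∑ i, a i := by
    show ∑ k ∈ Finset.range (n + 1), A k = ∑ i, a i
    rw [← Fin.sum_univ_eq_sum_range A (n + 1)]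
    exact Finset.sum_congr rfl fun i _ => hAa i
  -- structure of b
  set c : ℕ := b (Fin.last m) with hcdef
  have hbc : ∀ j, b j = c ∨ b j = c + 1 := by
    intro j
    have h1 : c ≤ b j := hb (Fin.le_last j)
    have h2 : b j ≤ b 0 := hb (Fin.zero_le j)
    omega
  set F : Finset (Fin (m + 1)) := Finset.univ.filter (fun j => b j = c + 1) with hFdef
  set r : ℕ := F.card with hrdef
  have hmem : ∀ j : Fin (m + 1), b j = c + 1 ↔ (j : ℕ) < r := by
    intro j
    constructor
    · intro hj
      have hsub : Finset.Iic j ⊆ F := by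
        intro j' hj'
        simp only [Finset.mem_Iic] at hj'
        have h3 := hb hj'
        have h2 : b j' ≤ c + 1 := le_trans (hb (Fin.zero_le j')) hb1
        simp only [hFdef, Finset.mem_filter]
        exact ⟨Finset.mem_univ _, by omega⟩
      have := Finset.card_le_card hsub
      rw [Fin.card_Iic] at this
      omega
    · intro hj
      by_contra hne
      have hbj : b j = c := (hbc j).resolve_right hne
      have hsub : F ⊆ Finset.Iio j := by
        intro j' hj'
        simp only [hFdef, Finset.mem_filter] at hj'
        rw [Finset.mem_Iio]
        by_contra hge
        push_neg at hge
        have := hb hge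
        omega
      have := Finset.card_le_card hsub
      rw [Fin.card_Iio] at this
      omega
  have hrle : r ≤ m := by
    by_contra h
    push_neg at h
    have : b (Fin.last m) = c + 1 := (hmem (Fin.last m)).mpr (by simpa using h)
    omega
  have hSr : (∑ i, a i) = (m + 1) * c + r := by
    have hbj : ∀ j : Fin (m + 1), b j = c + if (j : ℕ) < r then 1 else 0 := by
      intro j
      split_ifs with h
      · exact (hmem j).mpr h
      · rcases hbc j with h' | h'
        · simpa using h'
        · exact absurd ((hmem j).mp h') h
    rw [hsum, Finset.sum_congr rfl fun j _ => hbj j, Finset.sum_add_distrib,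
      Finset.sum_const, Finset.card_univ, Fintype.card_fin, smul_eq_mul]
    congr 1
    rw [← Finset.card_filter, hrdef]
    congr 1
    ext j
    simp [hFdef, hmem j]
    exact Iff.rfl
  have hSdiv : (∑ i, a i) / (m + 1) = c := by
    rw [hSr, Nat.mul_add_div (by omega), Nat.div_eq_of_lt (by omega), add_zero]
  have hSmod : (∑ i, a i) % (m + 1) = r := by
    rw [hSr, Nat.mul_add_mod]
    exact Nat.mod_eq_of_lt (by omega)
  -- the graph
  refine ⟨SimpleGraph.fromRel (fun u v => ∃ i j, u = Sum.inl i ∧ v = Sum.inr j ∧ P i j),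
    ?_, ?_, ?_, ?_⟩
  · intro i j
    simp [SimpleGraph.fromRel_adj]
  · intro i j
    simp [SimpleGraph.fromRel_adj]
  · -- left degrees
    intro i
    have hset : {w | (SimpleGraph.fromRel
        (fun u v => ∃ i j, u = Sum.inl i ∧ v = Sum.inr j ∧ P i j)).Adj (Sum.inl i) w}
        = Sum.inr '' {j | P i j} := by
      ext w
      cases w with
      | inl i' => simp [SimpleGraph.fromRel_adj]
      | inr j => simp [SimpleGraph.fromRel_adj]
    have hinj : Set.InjOn g ↑(Finset.Ico (T (i : ℕ)) (T (i : ℕ) + a i)) := by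
      intro x hx y hy hxy
      rw [hgdef] at hxy
      simp only [Fin.mk.injEq] at hxy
      rw [Finset.mem_coe] at hx hy
      exact eq_of_mem_Ico_mod_eq (haM i) hx hy hxy
    have himg : {j : Fin (m + 1) | P i j}
        = g '' ↑(Finset.Ico (T (i : ℕ)) (T (i : ℕ) + a i)) := by
      ext j
      simp only [hPdef, Set.mem_setOf_eq, Set.mem_image, Finset.mem_coe,
        Finset.mem_Ico, hgdef, Fin.ext_iff]
    simp only [SimpleGraph.degN]
    rw [hset, Set.ncard_image_of_injective _ Sum.inr_injective, himg,
      Set.ncard_image_of_injOn hinj, Set.ncard_coe_finset, Nat.card_Ico]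
    omega
  · -- right degrees
    intro j
    have hset : {w | (SimpleGraph.fromRel
        (fun u v => ∃ i j, u = Sum.inl i ∧ v = Sum.inr j ∧ P i j)).Adj (Sum.inr j) w}
        = Sum.inl '' {i | P i j} := by
      ext w
      cases w with
      | inl i => simp [SimpleGraph.fromRel_adj]
      | inr j' => simp [SimpleGraph.fromRel_adj]
    have hfin : {i : Fin (n + 1) | P i j}
        = ↑(Finset.univ.filter fun i => P i j) := by
      ext i; simp
    have key : (Finset.univ.filter fun i => P i j).card
        = ∑ i : Fin (n + 1), ((Finset.Ico (T (i : ℕ)) (T (i : ℕ) + a i)).filter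
            (fun x => x % (m + 1) = (j : ℕ))).card := by
      rw [Finset.card_filter]
      refine Finset.sum_congr rfl fun i _ => ?_
      rw [residue_card (m + 1) (j : ℕ) (T (i : ℕ)) (a i) (haM i)]
    have hrw : ∀ i : Fin (n + 1),
        ((Finset.Ico (T (i : ℕ)) (T (i : ℕ) + a i)).filter
            (fun x => x % (m + 1) = (j : ℕ))).card
        = ((Finset.Ico (T (i : ℕ)) (T ((i : ℕ) + 1))).filter
            (fun x => x % (m + 1) = (j : ℕ))).card := by
      intro i
      rw [hTsucc, hAa]
    simp only [SimpleGraph.degN]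
    rw [hset, Set.ncard_image_of_injective _ Sum.inl_injective, hfin,
      Set.ncard_coe_finset, key, Finset.sum_congr rfl fun i _ => hrw i,
      Fin.sum_univ_eq_sum_range
        (fun k => ((Finset.Ico (T k) (T (k + 1))).filter
          (fun x => x % (m + 1) = (j : ℕ))).card) (n + 1),
      partition_count T hTmono _ (n + 1), hT0, hTS, ← Finset.range_eq_Ico,
      count_mod (m + 1) (j : ℕ) j.isLt (∑ i, a i), hSdiv, hSmod]
    rcases hbc j with h | h
    · have hnlt : ¬ ((j : ℕ) < r) := fun hlt => by
        have := (hmem j).mpr hlt; omega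
      rw [h, if_neg hnlt]
      omega
    · rw [h, if_pos ((hmem j).mp h)]
end

section
/- Let a_1 ≥ ... ≥ a_n and b_1 ≥ ... ≥ b_m be sequences of positive integers with n ≤ m, a_1 ≤ m, Σ a_i = Σ b_i, and b_1 ≤ b_m + 1. Then there exists a simple bipartite graph G with parts A = {u_1,...,u_n} and B = {v_1,...,v_m} such that G has a matching covering A, deg(u_i) = a_i for 1 ≤ i ≤ n, and deg(v_j) = b_j for 1 ≤ j ≤ m. -/
open SimpleGraph

section AuxRealization

open Finset

variable {V : Type} [DecidableEq V] [Fintype V]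

lemma assemble {P : ℕ} (a : V → ℕ) (b : Fin (P+1) → ℕ) (W W' : Finset V) (j0 : Fin (P+1))
    (R0 : Finset V) (i0? : Option V)
    (E' : Finset (V × Fin P)) (μ' : V → Option (Fin P))
    (hR0live : ∀ i ∈ R0, 1 ≤ a i)
    (hcard : R0.card = b j0)
    (hrow' : ∀ i, (E'.filter (fun e => e.1 = i)).card = (if i ∈ R0 then a i - 1 else a i))
    (hcol' : ∀ j : Fin P, (E'.filter (fun e => e.2 = j)).card = b (j0.succAbove j))
    (hsome' : ∀ i, 1 ≤ (if i ∈ R0 then a i - 1 else a i) → i ∉ W' → (μ' i).isSome = true)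
    (hedge' : ∀ i j, μ' i = some j → (i, j) ∈ E')
    (hinj' : ∀ i i' j, μ' i = some j → μ' i' = some j → i = i')
    (hi0R : ∀ x, i0? = some x → x ∈ R0)
    (hcov : ∀ i, 1 ≤ a i → i ∉ W →
      i0? = some i ∨ (1 ≤ (if i ∈ R0 then a i - 1 else a i) ∧ i ∉ W')) :
    ∃ (E : Finset (V × Fin (P+1))) (μ : V → Option (Fin (P+1))),
      (∀ i, (E.filter (fun e => e.1 = i)).card = a i) ∧
      (∀ j, (E.filter (fun e => e.2 = j)).card = b j) ∧
      (∀ i, 1 ≤ a i → i ∉ W → (μ i).isSome = true) ∧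
      (∀ i j, μ i = some j → (i, j) ∈ E) ∧
      (∀ i i' j, μ i = some j → μ i' = some j → i = i') := by
  classical
  set embE : (V × Fin P) ↪ (V × Fin (P+1)) :=
    ⟨fun e => (e.1, j0.succAbove e.2), by
      rintro ⟨x, y⟩ ⟨x', y'⟩ h
      simp only [Prod.mk.injEq] at h
      exact Prod.ext h.1 (j0.succAbove_right_injective h.2)⟩ with hembE
  set embR : V ↪ (V × Fin (P+1)) :=
    ⟨fun x => (x, j0), by intro x x' h; simpa using h⟩ with hembR
  refine ⟨E'.map embE ∪ R0.map embR,
    fun i => if i0? = some i then some j0 else (μ' i).map j0.succAbove, ?_, ?_, ?_, ?_, ?_⟩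
  · -- row degrees
    intro i
    rw [filter_union, card_union_of_disjoint]
    · have h1 : (E'.map embE).filter (fun e => e.1 = i)
          = (E'.filter (fun e => e.1 = i)).map embE := by
        rw [Finset.filter_map]
        rfl
      have h2 : (R0.map embR).filter (fun e => e.1 = i)
          = (R0.filter (fun x => x = i)).map embR := by
        rw [Finset.filter_map]
        rfl
      rw [h1, h2, card_map, card_map, hrow', Finset.filter_eq']
      by_cases hi : i ∈ R0
      · have := hR0live i hi
        rw [if_pos hi, if_pos hi, Finset.card_singleton]
        omega
      · rw [if_neg hi, if_neg hi, Finset.card_empty]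
        omega
    · rw [Finset.disjoint_left]
      rintro e he1 he2
      simp only [mem_filter, Finset.mem_map] at he1 he2
      obtain ⟨⟨e', -, rfl⟩, -⟩ := he1
      obtain ⟨⟨x, -, hx⟩, -⟩ := he2
      have : j0.succAbove e'.2 = j0 := by
        have := congrArg Prod.snd hx
        exact this.symm
      exact Fin.succAbove_ne j0 e'.2 this
  · -- column degrees
    intro j
    rw [filter_union, card_union_of_disjoint]
    · by_cases hj : j = j0
      · subst hj
        have h1 : (E'.map embE).filter (fun e => e.2 = j) = ∅ := by
          rw [Finset.filter_map]
          convert Finset.map_empty embE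
          rw [Finset.filter_eq_empty_iff]
          intro e _
          exact Fin.succAbove_ne j e.2
        have h2 : (R0.map embR).filter (fun e => e.2 = j) = R0.map embR := by
          rw [Finset.filter_map]
          rw [Finset.filter_true_of_mem (by intro x _; rfl)]
        rw [h1, h2, card_map, hcard]
        simp
      · obtain ⟨j', rfl⟩ := Fin.exists_succAbove_eq hj
        have h1 : (E'.map embE).filter (fun e => e.2 = j0.succAbove j')
            = (E'.filter (fun e => e.2 = j')).map embE := by
          rw [Finset.filter_map]
          congr 1
          apply Finset.filter_congr
          intro e _
          constructor
          · intro h; exact j0.succAbove_right_injective h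
          · intro h; exact congrArg j0.succAbove h
        have h2 : (R0.map embR).filter (fun e => e.2 = j0.succAbove j') = ∅ := by
          rw [Finset.filter_map]
          convert Finset.map_empty embR
          rw [Finset.filter_eq_empty_iff]
          intro x _
          exact fun h => (Fin.succAbove_ne j0 j') h.symm
        rw [h1, h2, card_map, hcol']
        simp
    · rw [Finset.disjoint_left]
      rintro e he1 he2
      simp only [mem_filter, Finset.mem_map] at he1 he2
      obtain ⟨⟨e', -, rfl⟩, -⟩ := he1
      obtain ⟨⟨x, -, hx⟩, -⟩ := he2
      have : j0.succAbove e'.2 = j0 := by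
        have := congrArg Prod.snd hx
        exact this.symm
      exact Fin.succAbove_ne j0 e'.2 this
  · -- isSome
    intro i h1 h2
    dsimp only
    by_cases hi0 : i0? = some i
    · rw [if_pos hi0]; rfl
    · rcases hcov i h1 h2 with h | ⟨h3, h4⟩
      · exact absurd h hi0
      · rw [if_neg hi0]
        have h5 := hsome' i h3 h4
        cases hμ : μ' i with
        | none => rw [hμ] at h5; simp at h5
        | some v => rfl
  · -- edges
    intro i j hij
    dsimp only at hij
    by_cases hi0 : i0? = some i
    · rw [if_pos hi0] at hij
      have : j = j0 := by simpa using hij.symm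
      subst this
      apply Finset.mem_union_right
      rw [Finset.mem_map]
      exact ⟨i, hi0R i hi0, rfl⟩
    · rw [if_neg hi0] at hij
      rw [Option.map_eq_some_iff] at hij
      obtain ⟨j'', hj'', rfl⟩ := hij
      apply Finset.mem_union_left
      rw [Finset.mem_map]
      exact ⟨(i, j''), hedge' i j'' hj'', rfl⟩
  · -- injectivity
    intro i i' j hi hi'
    dsimp only at hi hi'
    by_cases h1 : i0? = some i <;> by_cases h2 : i0? = some i'
    · exact Option.some.inj (h1.symm.trans h2)
    · rw [if_pos h1] at hi
      rw [if_neg h2, Option.map_eq_some_iff] at hi'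
      obtain ⟨y, -, hy⟩ := hi'
      have hj : j = j0 := by simpa using hi.symm
      exact absurd (hy.trans hj) (Fin.succAbove_ne j0 y)
    · rw [if_pos h2] at hi'
      rw [if_neg h1, Option.map_eq_some_iff] at hi
      obtain ⟨y, -, hy⟩ := hi
      have hj : j = j0 := by simpa using hi'.symm
      exact absurd (hy.trans hj) (Fin.succAbove_ne j0 y)
    · rw [if_neg h1, Option.map_eq_some_iff] at hi
      rw [if_neg h2, Option.map_eq_some_iff] at hi'
      obtain ⟨y, hy1, hy2⟩ := hi
      obtain ⟨y', hy1', hy2'⟩ := hi'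
      have : y = y' := j0.succAbove_right_injective (hy2.trans hy2'.symm)
      subst this
      exact hinj' i i' y hy1 hy1'

set_option maxHeartbeats 1000000 in
theorem aux_realize (P : ℕ) : ∀ (a : V → ℕ) (b : Fin P → ℕ) (W : Finset V),
    (∀ j, 1 ≤ b j) → (∀ j j', b j ≤ b j' + 1) → (∑ i, a i = ∑ j, b j) → (∀ i, a i ≤ P) →
    ((univ.filter (fun i => 1 ≤ a i ∧ i ∉ W)).card ≤ P) →
    ∃ (E : Finset (V × Fin P)) (μ : V → Option (Fin P)),
      (∀ i, (E.filter (fun e => e.1 = i)).card = a i) ∧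
      (∀ j, (E.filter (fun e => e.2 = j)).card = b j) ∧
      (∀ i, 1 ≤ a i → i ∉ W → (μ i).isSome = true) ∧
      (∀ i j, μ i = some j → (i, j) ∈ E) ∧
      (∀ i i' j, μ i = some j → μ i' = some j → i = i') := by
  induction P with
  | zero =>
    intro a b W _ _ hsum _ _
    have hz : ∀ i, a i = 0 := by
      have h0 : ∑ i, a i = 0 := by rw [hsum]; simp
      intro i
      exact Finset.sum_eq_zero_iff.mp h0 i (mem_univ i)
    refine ⟨∅, fun _ => none, ?_, ?_, ?_, ?_, ?_⟩
    · intro i; simp [hz i]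
    · intro j; exact j.elim0
    · intro i h1 _; rw [hz i] at h1; omega
    · intro i j; exact j.elim0
    · intro i i' j; exact j.elim0
  | succ P ih =>
    intro a b W hbpos hreg hsum haP hN
    classical
    by_cases hP0 : P = 0
    · -- single column case
      subst hP0
      set live := univ.filter (fun i => 1 ≤ a i) with hlive
      have ha1 : ∀ i, a i ≤ 1 := haP
      have hlivesum : ∑ i ∈ live, a i = live.card := by
        rw [Finset.sum_congr rfl (fun i hi => ?_), Finset.sum_const, smul_eq_mul, mul_one]
        rw [hlive, mem_filter] at hi
        have := ha1 i; omega
      have htot : ∑ i, a i = live.card := by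
        rw [← Finset.sum_filter_add_sum_filter_not univ (fun i => 1 ≤ a i) a, ← hlive, hlivesum]
        have h0 : ∑ i ∈ univ.filter (fun i => ¬ 1 ≤ a i), a i = 0 := by
          apply Finset.sum_eq_zero; intro i hi; rw [mem_filter] at hi; omega
        omega
      have hb0 : ∑ j, b j = b 0 := by
        rw [Fin.sum_univ_one]
      set emb1 : V ↪ V × Fin (0 + 1) :=
        ⟨fun i => (i, 0), by intro x x' h; simpa using h⟩ with hemb1
      refine ⟨live.map emb1,
        fun i => if 1 ≤ a i ∧ i ∉ W then some 0 else none, ?_, ?_, ?_, ?_, ?_⟩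
      · intro i
        have h1 : (live.map emb1).filter (fun e => e.1 = i)
            = (live.filter (fun x => x = i)).map emb1 := by
          rw [Finset.filter_map]; rfl
        rw [h1, card_map, Finset.filter_eq']
        by_cases hi : i ∈ live
        · rw [if_pos hi, card_singleton]
          rw [hlive, mem_filter] at hi
          have := ha1 i; omega
        · rw [if_neg hi, card_empty]
          by_contra hc
          exact hi (by rw [hlive, mem_filter]; exact ⟨mem_univ i, by omega⟩)
      · intro j
        have hj : j = 0 := by omega
        subst hj
        have h2 : (live.map emb1).filter (fun e => e.2 = 0) = live.map emb1 := by
          apply Finset.filter_true_of_mem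
          intro e he
          rw [Finset.mem_map] at he
          obtain ⟨x, -, rfl⟩ := he
          rfl
        rw [h2, card_map, ← htot, hsum, hb0]
      · intro i h1 h2
        dsimp only
        rw [if_pos ⟨h1, h2⟩]; rfl
      · intro i j hij
        dsimp only at hij
        by_cases hc : 1 ≤ a i ∧ i ∉ W
        · rw [if_pos hc] at hij
          rw [Finset.mem_map]
          refine ⟨i, ?_, ?_⟩
          · rw [hlive, mem_filter]; exact ⟨mem_univ i, hc.1⟩
          · have : j = 0 := by omega
            rw [this]; rfl
        · rw [if_neg hc] at hij; exact absurd hij (by simp)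
      · intro i i' j hi hi'
        dsimp only at hi hi'
        have hmi : i ∈ univ.filter (fun i => 1 ≤ a i ∧ i ∉ W) := by
          by_cases hc : 1 ≤ a i ∧ i ∉ W
          · rw [mem_filter]; exact ⟨mem_univ i, hc⟩
          · rw [if_neg hc] at hi; exact absurd hi (by simp)
        have hmi' : i' ∈ univ.filter (fun i => 1 ≤ a i ∧ i ∉ W) := by
          by_cases hc : 1 ≤ a i' ∧ i' ∉ W
          · rw [mem_filter]; exact ⟨mem_univ i', hc⟩
          · rw [if_neg hc] at hi'; exact absurd hi' (by simp)
        exact Finset.card_le_one.mp (by omega) i hmi i' hmi'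
    · -- main case : at least 2 columns
      have hP1 : 1 ≤ P := Nat.pos_of_ne_zero hP0
      obtain ⟨j0, -, hj0u⟩ := Finset.exists_max_image (univ : Finset (Fin (P+1))) b ⟨0, mem_univ 0⟩
      obtain ⟨j1, -, hj1u⟩ := Finset.exists_min_image (univ : Finset (Fin (P+1))) b ⟨0, mem_univ 0⟩
      have hj0 : ∀ j, b j ≤ b j0 := fun j => hj0u j (mem_univ j)
      have hj1 : ∀ j, b j1 ≤ b j := fun j => hj1u j (mem_univ j)
      set M := b j0 with hMdef
      set q := b j1 with hqdef
      have hq_le_M : q ≤ M := hj1 j0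
      have hM_le_q1 : M ≤ q + 1 := hreg j0 j1
      have hSb_lo : M + P * q ≤ ∑ j, b j := by
        rw [← Finset.sum_erase_add _ _ (mem_univ j0)]
        have h1 := Finset.card_nsmul_le_sum (univ.erase j0) b q (fun j _ => hj1 j)
        have h1' : P * q ≤ ∑ x ∈ univ.erase j0, b x := by
          rw [Finset.card_erase_of_mem (mem_univ j0), card_univ, Fintype.card_fin,
            smul_eq_mul] at h1
          simpa using h1
        omega
      have hSb_hi : ∑ j, b j ≤ q + P * (q + 1) := by
        rw [← Finset.sum_erase_add _ _ (mem_univ j1)]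
        have h1 := Finset.sum_le_card_nsmul (univ.erase j1) b (q + 1)
          (fun j _ => by have := hj0 j; omega)
        have h1' : ∑ x ∈ univ.erase j1, b x ≤ P * (q + 1) := by
          rw [Finset.card_erase_of_mem (mem_univ j1), card_univ, Fintype.card_fin,
            smul_eq_mul] at h1
          simpa using h1
        omega
      set live := univ.filter (fun i => 1 ≤ a i) with hlivedef
      set Nset := univ.filter (fun i => 1 ≤ a i ∧ i ∉ W) with hNsetdef
      set bigs := univ.filter (fun i => 2 ≤ a i) with hbigsdef
      set pRows := univ.filter (fun i => a i = P + 1) with hpRowsdef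
      set onesW := univ.filter (fun i => a i = 1 ∧ i ∈ W) with honesWdef
      set onesN := univ.filter (fun i => a i = 1 ∧ i ∉ W) with honesNdef
      have hlive_sum : ∑ i, a i = ∑ i ∈ live, a i := by
        rw [← Finset.sum_filter_add_sum_filter_not univ (fun i => 1 ≤ a i) a, ← hlivedef]
        have h0 : ∑ i ∈ univ.filter (fun i => ¬ 1 ≤ a i), a i = 0 := by
          apply Finset.sum_eq_zero; intro i hi; rw [mem_filter] at hi; omega
        omega
      have hpRows_live : pRows ⊆ live := by
        intro x hx; rw [hpRowsdef, mem_filter] at hx; rw [hlivedef, mem_filter]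
        exact ⟨mem_univ x, by omega⟩
      have hbigs_live : bigs ⊆ live := by
        intro x hx; rw [hbigsdef, mem_filter] at hx; rw [hlivedef, mem_filter]
        exact ⟨mem_univ x, by omega⟩
      have honesW_live : onesW ⊆ live := by
        intro x hx; rw [honesWdef, mem_filter] at hx; rw [hlivedef, mem_filter]
        exact ⟨mem_univ x, by omega⟩
      have L1 : M ≤ live.card := by
        by_contra hc
        push_neg at hc
        have e2 : ∑ i ∈ live, a i ≤ live.card * (P + 1) := by
          have := Finset.sum_le_card_nsmul live a (P + 1) (fun i _ => haP i)
          rwa [smul_eq_mul] at this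
        have e3 : live.card ≤ q := by omega
        have e4 : live.card * P ≤ q * P := Nat.mul_le_mul_right P e3
        have e5 : live.card * (P + 1) = live.card * P + live.card := by ring
        have e6 : q * P = P * q := by ring
        omega
      have L2 : pRows.card ≤ M := by
        by_contra hc
        push_neg at hc
        have e1 : pRows.card * (P + 1) ≤ ∑ i ∈ pRows, a i := by
          have := Finset.card_nsmul_le_sum pRows a (P + 1)
            (fun i hi => by rw [hpRowsdef, mem_filter] at hi; omega)
          rwa [smul_eq_mul] at this
        have e2 : ∑ i ∈ pRows, a i ≤ ∑ i, a i :=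
          Finset.sum_le_sum_of_subset (Finset.subset_univ pRows)
        have e3 : (q + 1) * (P + 1) ≤ pRows.card * (P + 1) :=
          Nat.mul_le_mul_right (P + 1) (by omega)
        have e4 : (q + 1) * (P + 1) = P * (q + 1) + (q + 1) := by ring
        omega
      have L3 : ∀ x ∈ live, a x ≠ P + 1 → pRows.card + 1 ≤ M := by
        intro x hx hxne
        by_contra hc
        push_neg at hc
        have hxp : x ∉ pRows := by rw [hpRowsdef, mem_filter]; push_neg; intro _; exact hxne
        have hax : 1 ≤ a x := by rw [hlivedef, mem_filter] at hx; exact hx.2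
        have e1 : pRows.card * (P + 1) + a x ≤ ∑ i, a i := by
          have h1 : pRows.card * (P + 1) ≤ ∑ i ∈ pRows, a i := by
            have := Finset.card_nsmul_le_sum pRows a (P + 1)
              (fun i hi => by rw [hpRowsdef, mem_filter] at hi; omega)
            rwa [smul_eq_mul] at this
          have h2 : ∑ i ∈ insert x pRows, a i = a x + ∑ i ∈ pRows, a i :=
            Finset.sum_insert hxp
          have h3 : ∑ i ∈ insert x pRows, a i ≤ ∑ i, a i :=
            Finset.sum_le_sum_of_subset (Finset.subset_univ _)
          omega
        have e2 : M * (P + 1) ≤ pRows.card * (P + 1) := Nat.mul_le_mul_right (P + 1) (by omega)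
        rcases Nat.eq_or_lt_of_le hq_le_M with hMq | hMlt
        · -- M = q : all b equal
          have hall : ∀ j, b j = q := fun j => le_antisymm (hMq ▸ hj0 j) (hj1 j)
          have hsb : ∑ j, b j = (P + 1) * q := by
            rw [Finset.sum_congr rfl (fun j _ => hall j), Finset.sum_const, card_univ,
              Fintype.card_fin, smul_eq_mul]
          have e3 : M * (P + 1) = (P + 1) * q := by rw [← hMq]; ring
          omega
        · -- M = q + 1
          have hMq1 : M = q + 1 := by omega
          have e3 : M * (P + 1) = P * (q + 1) + q + 1 := by rw [hMq1]; ring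
          omega
      have L4 : M ≤ bigs.card + onesW.card + 1 := by
        by_contra hc
        push_neg at hc
        have hKq : bigs.card + 1 ≤ q := by omega
        have hdisj : Disjoint onesW onesN := by
          rw [Finset.disjoint_left]
          intro x hx hx'
          rw [honesWdef, mem_filter] at hx; rw [honesNdef, mem_filter] at hx'
          exact hx'.2.2 hx.2.2
        have hsplit : ∑ i, a i ≤ bigs.card * (P + 1) +
            ∑ i ∈ univ.filter (fun i => ¬ 2 ≤ a i), a i := by
          rw [← Finset.sum_filter_add_sum_filter_not univ (fun i => 2 ≤ a i) a, ← hbigsdef]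
          have h2 : ∑ i ∈ bigs, a i ≤ bigs.card * (P + 1) := by
            have := Finset.sum_le_card_nsmul bigs a (P + 1) (fun i _ => haP i)
            rwa [smul_eq_mul] at this
          omega
        have hsmall_hi : ∑ i ∈ univ.filter (fun i => ¬ 2 ≤ a i), a i ≤
            onesW.card + onesN.card := by
          have h2 : ∑ i ∈ univ.filter (fun i => ¬ 2 ≤ a i), a i ≤
              ∑ i ∈ univ.filter (fun i => ¬ 2 ≤ a i), (if a i = 1 then 1 else 0) := by
            apply Finset.sum_le_sum
            intro i hi
            rw [mem_filter] at hi
            by_cases h : a i = 1 <;> simp [h] <;> omega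
          have h3 : ∑ i ∈ univ.filter (fun i => ¬ 2 ≤ a i), (if a i = 1 then 1 else 0) =
              ((univ.filter (fun i => ¬ 2 ≤ a i)).filter (fun i => a i = 1)).card := by
            simpa using Finset.sum_boole (s := univ.filter (fun i => ¬ 2 ≤ a i))
              (p := fun i => a i = 1)
          have h4 : (univ.filter (fun i => ¬ 2 ≤ a i)).filter (fun i => a i = 1)
              = onesW ∪ onesN := by
            ext x
            rw [mem_filter, mem_filter, Finset.mem_union, honesWdef, honesNdef,
              mem_filter, mem_filter]
            constructor
            · rintro ⟨⟨-, -⟩, h⟩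
              by_cases hw : x ∈ W
              · exact Or.inl ⟨mem_univ x, h, hw⟩
              · exact Or.inr ⟨mem_univ x, h, hw⟩
            · rintro (⟨-, h, -⟩ | ⟨-, h, -⟩) <;> exact ⟨⟨mem_univ x, by omega⟩, h⟩
          have h5 : (onesW ∪ onesN).card = onesW.card + onesN.card :=
            Finset.card_union_of_disjoint hdisj
          rw [h4] at h3
          omega
        have hN1 : onesN.card ≤ Nset.card := by
          apply Finset.card_le_card
          intro x hx
          rw [honesNdef, mem_filter] at hx
          rw [hNsetdef, mem_filter]
          exact ⟨mem_univ x, by omega, hx.2.2⟩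
        have e1 : P * (bigs.card + 1) ≤ P * q := Nat.mul_le_mul_left P hKq
        have e2 : P * (bigs.card + 1) = bigs.card * P + P := by ring
        have e3 : bigs.card * (P + 1) = bigs.card * P + bigs.card := by ring
        linarith [hsum, hSb_lo, hsplit, hsmall_hi, hN1, hN, hc, e1, e2, e3]
      suffices h : ∃ (R0 : Finset V) (i0? : Option V) (W' : Finset V),
          R0 ⊆ live ∧ R0.card = M ∧ pRows ⊆ R0 ∧
          (∀ x, i0? = some x → x ∈ R0 ∧ x ∈ Nset ∧ W' = insert x W) ∧
          (∀ i, 1 ≤ a i → i ∉ W → (i0? = some i ∨ (i ∈ R0 → 2 ≤ a i))) ∧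
          (i0? = none → Nset = ∅ ∧ W' = W) by
        obtain ⟨R0, i0?, W', hR0live, hR0card, hpR0, h4, h5, h6⟩ := h
        have hR0live' : ∀ i ∈ R0, 1 ≤ a i := by
          intro i hi
          have := hR0live hi
          rw [hlivedef, mem_filter] at this
          exact this.2
        have hb'pos : ∀ j : Fin P, 1 ≤ b (j0.succAbove j) := fun j => hbpos _
        have hb'reg : ∀ j j' : Fin P, b (j0.succAbove j) ≤ b (j0.succAbove j') + 1 :=
          fun j j' => hreg _ _
        have hsum' : ∑ i, (if i ∈ R0 then a i - 1 else a i) = ∑ j : Fin P, b (j0.succAbove j) := by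
          have hs2 : ∑ j : Fin (P + 1), b j = b j0 + ∑ j : Fin P, b (j0.succAbove j) :=
            Fin.sum_univ_succAbove b j0
          have hfil : univ.filter (fun i => i ∈ R0) = R0 := by
            ext x; simp
          have hs1 : ∑ i, (if i ∈ R0 then a i - 1 else a i) + R0.card = ∑ i, a i := by
            rw [← Finset.sum_filter_add_sum_filter_not univ (fun i => i ∈ R0)
                (fun i => if i ∈ R0 then a i - 1 else a i),
              ← Finset.sum_filter_add_sum_filter_not univ (fun i => i ∈ R0) a, hfil]
            have hA : ∑ i ∈ R0, (if i ∈ R0 then a i - 1 else a i) = ∑ i ∈ R0, (a i - 1) :=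
              Finset.sum_congr rfl (fun i hi => if_pos hi)
            have hB : ∑ i ∈ univ.filter (fun i => ¬ i ∈ R0), (if i ∈ R0 then a i - 1 else a i)
                = ∑ i ∈ univ.filter (fun i => ¬ i ∈ R0), a i :=
              Finset.sum_congr rfl (fun i hi => by
                rw [mem_filter] at hi; exact if_neg hi.2)
            have hC : ∑ i ∈ R0, (a i - 1) + R0.card = ∑ i ∈ R0, a i := by
              have he : ∀ i ∈ R0, (a i - 1) + 1 = a i := fun i hi => by
                have := hR0live' i hi; omega
              calc ∑ i ∈ R0, (a i - 1) + R0.card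
                  = ∑ i ∈ R0, ((a i - 1) + 1) := by
                    rw [Finset.sum_add_distrib, Finset.sum_const, smul_eq_mul, mul_one]
                _ = ∑ i ∈ R0, a i := Finset.sum_congr rfl he
            omega
          omega
        have ha'P : ∀ i, (if i ∈ R0 then a i - 1 else a i) ≤ P := by
          intro i
          by_cases hi : i ∈ R0
          · rw [if_pos hi]; have := haP i; omega
          · rw [if_neg hi]
            have hne : a i ≠ P + 1 := by
              intro hcon
              exact hi (hpR0 (by rw [hpRowsdef, mem_filter]; exact ⟨mem_univ i, hcon⟩))
            have := haP i; omega
        have hN' : (univ.filter (fun i => 1 ≤ (if i ∈ R0 then a i - 1 else a i) ∧ i ∉ W')).card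
            ≤ P := by
          cases hi0 : i0? with
          | none =>
            obtain ⟨hNe, hW'⟩ := h6 hi0
            have hsub : univ.filter (fun i => 1 ≤ (if i ∈ R0 then a i - 1 else a i) ∧ i ∉ W')
                ⊆ Nset := by
              intro i hi
              rw [mem_filter] at hi
              rw [hNsetdef, mem_filter]
              refine ⟨mem_univ i, ?_, ?_⟩
              · by_cases hiR : i ∈ R0
                · rw [if_pos hiR] at hi; omega
                · rw [if_neg hiR] at hi; exact hi.2.1
              · have := hi.2.2
                rw [hW'] at this
                exact this
            have hle := Finset.card_le_card hsub
            rw [hNe] at hle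
            simp only [Finset.card_empty, Nat.le_zero] at hle
            omega
          | some x =>
            obtain ⟨hxR, hxN, hW'⟩ := h4 x hi0
            have hsub : univ.filter (fun i => 1 ≤ (if i ∈ R0 then a i - 1 else a i) ∧ i ∉ W')
                ⊆ Nset.erase x := by
              intro i hi
              rw [mem_filter] at hi
              have hiW' := hi.2.2
              rw [hW', Finset.mem_insert] at hiW'
              push_neg at hiW'
              rw [Finset.mem_erase, hNsetdef, mem_filter]
              refine ⟨hiW'.1, mem_univ i, ?_, hiW'.2⟩
              by_cases hiR : i ∈ R0
              · have := hi.2.1; rw [if_pos hiR] at this; omega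
              · have := hi.2.1; rw [if_neg hiR] at this; exact this
            have hle := Finset.card_le_card hsub
            have hce := Finset.card_erase_of_mem hxN
            have hNpos : 1 ≤ Nset.card := Finset.card_pos.mpr ⟨x, hxN⟩
            omega
        obtain ⟨E', μ', hrow', hcol', hsome', hedge', hinj'⟩ :=
          ih (fun i => if i ∈ R0 then a i - 1 else a i) (fun j => b (j0.succAbove j)) W'
            hb'pos hb'reg hsum' ha'P hN'
        apply assemble a b W W' j0 R0 i0? E' μ' hR0live' hR0card hrow' hcol' hsome' hedge' hinj'
          (fun x hx => (h4 x hx).1)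
        intro i hi1 hi2
        by_cases hx : i0? = some i
        · exact Or.inl hx
        · right
          constructor
          · rcases h5 i hi1 hi2 with h | h
            · exact absurd h hx
            · by_cases hiR : i ∈ R0
              · have := h hiR
                rw [if_pos hiR]; omega
              · rw [if_neg hiR]; exact hi1
          · cases hi0 : i0? with
            | none => rw [(h6 hi0).2]; exact hi2
            | some y =>
              rw [(h4 y hi0).2.2, Finset.mem_insert]
              push_neg
              refine ⟨?_, hi2⟩
              intro hcon
              exact hx (by rw [hi0, hcon])
      by_cases hNe : Nset.Nonempty
      · -- there is an unmatched live row
        obtain ⟨i_r, hir_mem⟩ := hNe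
        have hir_liveW : 1 ≤ a i_r ∧ i_r ∉ W := by
          rw [hNsetdef, mem_filter] at hir_mem; exact hir_mem.2
        have hir_live : i_r ∈ live := by
          rw [hlivedef, mem_filter]; exact ⟨mem_univ _, hir_liveW.1⟩
        set base := insert i_r pRows with hbasedef
        have hbase_live : base ⊆ live := by
          intro x hx
          rw [hbasedef, Finset.mem_insert] at hx
          rcases hx with rfl | hx
          · exact hir_live
          · exact hpRows_live hx
        have hbase_card : base.card ≤ M := by
          by_cases hirp : a i_r = P + 1
          · have hirP : i_r ∈ pRows := by
              rw [hpRowsdef, mem_filter]; exact ⟨mem_univ _, hirp⟩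
            rw [hbasedef, Finset.insert_eq_self.mpr hirP]
            exact L2
          · have h1 := L3 i_r hir_live hirp
            have h2 := Finset.card_insert_le i_r pRows
            rw [hbasedef]
            omega
        set good := (bigs ∪ onesW) ∪ base with hgooddef
        have hgood_live : good ⊆ live := by
          intro x hx
          rw [hgooddef, Finset.mem_union, Finset.mem_union] at hx
          rcases hx with (hx | hx) | hx
          · exact hbigs_live hx
          · exact honesW_live hx
          · exact hbase_live hx
        have hbase_good : base ⊆ good := by
          rw [hgooddef]; exact Finset.subset_union_right
        by_cases hMg : M ≤ good.card
        · obtain ⟨R0, hbR0, hR0g, hR0card⟩ :=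
            Finset.exists_subsuperset_card_eq hbase_good hbase_card hMg
          refine ⟨R0, some i_r, insert i_r W, hR0g.trans hgood_live, hR0card, ?_, ?_, ?_, ?_⟩
          · intro x hx
            exact hbR0 (by rw [hbasedef]; exact Finset.mem_insert_of_mem hx)
          · intro x hx
            have hxx : i_r = x := Option.some.inj hx
            subst hxx
            exact ⟨hbR0 (by rw [hbasedef]; exact Finset.mem_insert_self _ _), hir_mem, rfl⟩
          · intro i hi1 hi2
            by_cases hii : i = i_r
            · subst hii; exact Or.inl rfl
            · right
              intro hiR0
              have hig := hR0g hiR0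
              rw [hgooddef, Finset.mem_union, Finset.mem_union] at hig
              rcases hig with (hx | hx) | hx
              · rw [hbigsdef, mem_filter] at hx; exact hx.2
              · rw [honesWdef, mem_filter] at hx; exact absurd hx.2.2 hi2
              · rw [hbasedef, Finset.mem_insert] at hx
                rcases hx with rfl | hx
                · exact absurd rfl hii
                · rw [hpRowsdef, mem_filter] at hx; omega
          · intro hcon; exact absurd hcon (by simp)
        · push_neg at hMg
          have hdisjBO : Disjoint bigs onesW := by
            rw [Finset.disjoint_left]
            intro x hx hx'
            rw [hbigsdef, mem_filter] at hx
            rw [honesWdef, mem_filter] at hx'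
            omega
          have hirbig : 2 ≤ a i_r := by
            by_contra hir1
            push_neg at hir1
            have hnotin : i_r ∉ bigs ∪ onesW := by
              rw [Finset.mem_union, hbigsdef, honesWdef, mem_filter, mem_filter]
              push_neg
              exact ⟨fun _ => by omega, fun _ _ => hir_liveW.2⟩
            have hsubs : insert i_r (bigs ∪ onesW) ⊆ good := by
              intro x hx
              rw [Finset.mem_insert] at hx
              rcases hx with rfl | hx
              · exact hbase_good (by rw [hbasedef]; exact Finset.mem_insert_self _ _)
              · rw [hgooddef]; exact Finset.mem_union_left _ hx
            have h1 : (insert i_r (bigs ∪ onesW)).card = bigs.card + onesW.card + 1 := by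
              rw [Finset.card_insert_of_notMem hnotin,
                Finset.card_union_of_disjoint hdisjBO]
            have h2 := Finset.card_le_card hsubs
            omega
          have hbase_sub : base ⊆ bigs ∪ onesW := by
            intro x hx
            rw [hbasedef, Finset.mem_insert] at hx
            apply Finset.mem_union_left
            rcases hx with rfl | hx
            · rw [hbigsdef, mem_filter]; exact ⟨mem_univ _, hirbig⟩
            · rw [hpRowsdef, mem_filter] at hx
              rw [hbigsdef, mem_filter]
              exact ⟨mem_univ _, by omega⟩
          have hgood_eq : good = bigs ∪ onesW := by
            rw [hgooddef]
            exact Finset.union_eq_left.mpr hbase_sub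
          have hgoodcard : good.card = bigs.card + onesW.card := by
            rw [hgood_eq, Finset.card_union_of_disjoint hdisjBO]
          have hx0 : ∃ x0, x0 ∈ live ∧ x0 ∉ good := by
            by_contra hcon
            push_neg at hcon
            have hsub : live ⊆ good := fun x hx => hcon x hx
            have := Finset.card_le_card hsub
            omega
          obtain ⟨x0, hx0live, hx0good⟩ := hx0
          have hx0a1 : 1 ≤ a x0 := by
            rw [hlivedef, mem_filter] at hx0live; exact hx0live.2
          have hx0nb : a x0 = 1 := by
            by_contra hcon
            apply hx0good
            rw [hgood_eq, Finset.mem_union]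
            left; rw [hbigsdef, mem_filter]; exact ⟨mem_univ _, by omega⟩
          have hx0W : x0 ∉ W := by
            intro hcon
            apply hx0good
            rw [hgood_eq, Finset.mem_union]
            right; rw [honesWdef, mem_filter]; exact ⟨mem_univ _, hx0nb, hcon⟩
          refine ⟨insert x0 good, some x0, insert x0 W, ?_, ?_, ?_, ?_, ?_, ?_⟩
          · intro x hx
            rw [Finset.mem_insert] at hx
            rcases hx with rfl | hx
            · exact hx0live
            · exact hgood_live hx
          · rw [Finset.card_insert_of_notMem hx0good]
            omega
          · intro x hx
            apply Finset.mem_insert_of_mem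
            rw [hgood_eq]
            apply Finset.mem_union_left
            rw [hpRowsdef, mem_filter] at hx
            rw [hbigsdef, mem_filter]
            exact ⟨mem_univ _, by omega⟩
          · intro x hx
            have hxx : x0 = x := Option.some.inj hx
            subst hxx
            refine ⟨Finset.mem_insert_self _ _, ?_, rfl⟩
            rw [hNsetdef, mem_filter]
            exact ⟨mem_univ _, hx0a1, hx0W⟩
          · intro i hi1 hi2
            by_cases hii : i = x0
            · subst hii; exact Or.inl rfl
            · right
              intro hiR0
              rw [Finset.mem_insert] at hiR0
              rcases hiR0 with rfl | hig
              · exact absurd rfl hii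
              · rw [hgood_eq, Finset.mem_union] at hig
                rcases hig with hxx | hxx
                · rw [hbigsdef, mem_filter] at hxx; exact hxx.2
                · rw [honesWdef, mem_filter] at hxx; exact absurd hxx.2.2 hi2
          · intro hcon; exact absurd hcon (by simp)
      · -- every live row is already matched
        have hNempty : Nset = ∅ := Finset.not_nonempty_iff_eq_empty.mp hNe
        obtain ⟨R0, hpsub, hR0live, hR0card⟩ :=
          Finset.exists_subsuperset_card_eq hpRows_live L2 L1
        refine ⟨R0, none, W, hR0live, hR0card, hpsub, ?_, ?_, ?_⟩
        · intro x hx; exact absurd hx (by simp)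
        · intro i hi1 hi2
          exfalso
          have hmem : i ∈ Nset := by
            rw [hNsetdef, mem_filter]; exact ⟨mem_univ _, hi1, hi2⟩
          rw [hNempty] at hmem
          exact absurd hmem (Finset.notMem_empty i)
        · intro _; exact ⟨hNempty, rfl⟩


end AuxRealization

lemma degN_eq' {V' : Type*} (G : SimpleGraph V') (v : V') (k : ℕ) (S : Set V')
    (h1 : ∀ w, G.Adj v w ↔ w ∈ S) (h2 : S.ncard = k) : G.degN v = k := by
  rw [SimpleGraph.degN, show {w | G.Adj v w} = S from Set.ext h1, h2]

theorem bipartite_realization_with_matching (n m : ℕ) (a : Fin (n + 1) → ℕ) (b : Fin (m + 1) → ℕ)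
    (hnm : n + 1 ≤ m + 1)
    (ha : Antitone a) (hb : Antitone b)
    (hap : ∀ i, 0 < a i) (hbp : ∀ j, 0 < b j)
    (ha1 : a 0 ≤ m + 1)
    (hsum : ∑ i, a i = ∑ j, b j)
    (hb1 : b 0 ≤ b (Fin.last m) + 1) :
    ∃ G : SimpleGraph (Fin (n + 1) ⊕ Fin (m + 1)),
      (∀ i j, ¬ G.Adj (Sum.inl i) (Sum.inl j)) ∧
      (∀ i j, ¬ G.Adj (Sum.inr i) (Sum.inr j)) ∧
      (∀ i, G.degN (Sum.inl i) = a i) ∧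
      (∀ j, G.degN (Sum.inr j) = b j) ∧
      (∃ M : G.Subgraph, M.IsMatching ∧ ∀ i, Sum.inl i ∈ M.verts) := by
  classical
  have hreg : ∀ j j' : Fin (m + 1), b j ≤ b j' + 1 := by
    intro j j'
    calc b j ≤ b 0 := hb (Fin.zero_le j)
      _ ≤ b (Fin.last m) + 1 := hb1
      _ ≤ b j' + 1 := by have := hb (Fin.le_last j'); omega
  have haP : ∀ i, a i ≤ m + 1 := by
    intro i
    calc a i ≤ a 0 := ha (Fin.zero_le i)
      _ ≤ m + 1 := ha1
  have hN : ((Finset.univ.filter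
      (fun i : Fin (n + 1) => 1 ≤ a i ∧ i ∉ (∅ : Finset (Fin (n + 1))))).card ≤ m + 1) := by
    have : (Finset.univ.filter
        (fun i : Fin (n + 1) => 1 ≤ a i ∧ i ∉ (∅ : Finset (Fin (n + 1))))) = Finset.univ := by
      apply Finset.filter_true_of_mem
      intro i _
      exact ⟨hap i, Finset.notMem_empty i⟩
    rw [this, Finset.card_univ, Fintype.card_fin]
    exact hnm
  obtain ⟨E, μ, hrow, hcol, hsome, hedge, hinj⟩ :=
    aux_realize (m + 1) a b ∅ hbp hreg hsum haP hN
  have hμs : ∀ i, (μ i).isSome = true := fun i => hsome i (hap i) (Finset.notMem_empty i)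
  set ν : Fin (n + 1) → Fin (m + 1) := fun i => (μ i).get (hμs i) with hνdef
  have hνe : ∀ i, μ i = some (ν i) := fun i => (Option.some_get (hμs i)).symm
  have hνE : ∀ i, (i, ν i) ∈ E := fun i => hedge i (ν i) (hνe i)
  have hνinj : Function.Injective ν := by
    intro i i' h
    exact hinj i i' (ν i) (hνe i) (by rw [hνe i', h])
  refine ⟨{
    Adj := fun x y =>
      (∃ i j, (i, j) ∈ E ∧ x = Sum.inl i ∧ y = Sum.inr j) ∨
      (∃ i j, (i, j) ∈ E ∧ x = Sum.inr j ∧ y = Sum.inl i)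
    symm := by
      constructor
      rintro x y (⟨i, j, hij, rfl, rfl⟩ | ⟨i, j, hij, rfl, rfl⟩)
      · exact Or.inr ⟨i, j, hij, rfl, rfl⟩
      · exact Or.inl ⟨i, j, hij, rfl, rfl⟩
    loopless := by
      constructor
      rintro x (⟨i, j, hij, rfl, h⟩ | ⟨i, j, hij, rfl, h⟩) <;> exact absurd h (by simp)
  }, ?_, ?_, ?_, ?_, ?_⟩
  · rintro i j (⟨i', j', hij, h1, h2⟩ | ⟨i', j', hij, h1, h2⟩)
    · exact absurd h2 (by simp)
    · exact absurd h1 (by simp)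
  · rintro i j (⟨i', j', hij, h1, h2⟩ | ⟨i', j', hij, h1, h2⟩)
    · exact absurd h1 (by simp)
    · exact absurd h2 (by simp)
  · -- left degrees
    intro i
    refine degN_eq' _ _ _ (Sum.inr '' {j | (i, j) ∈ E}) (fun w => ?_) ?_
    · constructor
      · rintro (⟨i', j, hij, h1, rfl⟩ | ⟨i', j, hij, h1, h2⟩)
        · obtain rfl : i = i' := by injection h1
          exact ⟨j, hij, rfl⟩
        · exact absurd h1 (by simp)
      · rintro ⟨j, hij, rfl⟩
        exact Or.inl ⟨i, j, hij, rfl, rfl⟩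
    · rw [Set.ncard_image_of_injective _ Sum.inr_injective]
      have hset2 : {j | (i, j) ∈ E} = ↑((E.filter (fun e => e.1 = i)).image Prod.snd) := by
        ext j
        simp only [Set.mem_setOf_eq, Finset.coe_image, Set.mem_image, Finset.mem_coe,
          Finset.mem_filter]
        constructor
        · intro hj; exact ⟨(i, j), ⟨hj, rfl⟩, rfl⟩
        · rintro ⟨⟨x, y⟩, ⟨he, h1⟩, h2⟩
          cases h1; cases h2; exact he
      rw [hset2, Set.ncard_coe_finset, Finset.card_image_of_injOn, hrow]
      rintro ⟨x, y⟩ hx ⟨x', y'⟩ hx' h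
      rw [Finset.mem_coe, Finset.mem_filter] at hx hx'
      cases hx.2; cases hx'.2; cases h; rfl
  · -- right degrees
    intro j
    refine degN_eq' _ _ _ (Sum.inl '' {i | (i, j) ∈ E}) (fun w => ?_) ?_
    · constructor
      · rintro (⟨i, j', hij, h1, h2⟩ | ⟨i, j', hij, h1, rfl⟩)
        · exact absurd h1 (by simp)
        · obtain rfl : j = j' := by injection h1
          exact ⟨i, hij, rfl⟩
      · rintro ⟨i, hij, rfl⟩
        exact Or.inr ⟨i, j, hij, rfl, rfl⟩
    · rw [Set.ncard_image_of_injective _ Sum.inl_injective]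
      have hset2 : {i | (i, j) ∈ E} = ↑((E.filter (fun e => e.2 = j)).image Prod.fst) := by
        ext i
        simp only [Set.mem_setOf_eq, Finset.coe_image, Set.mem_image, Finset.mem_coe,
          Finset.mem_filter]
        constructor
        · intro hj; exact ⟨(i, j), ⟨hj, rfl⟩, rfl⟩
        · rintro ⟨⟨x, y⟩, ⟨he, h1⟩, h2⟩
          cases h1; cases h2; exact he
      rw [hset2, Set.ncard_coe_finset, Finset.card_image_of_injOn, hcol]
      rintro ⟨x, y⟩ hx ⟨x', y'⟩ hx' h
      rw [Finset.mem_coe, Finset.mem_filter] at hx hx'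
      cases hx.2; cases hx'.2; cases h; rfl
  · -- the matching
    refine ⟨{
      verts := Set.range Sum.inl ∪ Set.range (fun i => Sum.inr (ν i))
      Adj := fun x y =>
        (∃ i, x = Sum.inl i ∧ y = Sum.inr (ν i)) ∨
        (∃ i, y = Sum.inl i ∧ x = Sum.inr (ν i))
      adj_sub := by
        rintro x y (⟨i, rfl, rfl⟩ | ⟨i, rfl, rfl⟩)
        · exact Or.inl ⟨i, ν i, hνE i, rfl, rfl⟩
        · exact Or.inr ⟨i, ν i, hνE i, rfl, rfl⟩
      edge_vert := by
        rintro x y (⟨i, rfl, rfl⟩ | ⟨i, rfl, rfl⟩)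
        · exact Or.inl ⟨i, rfl⟩
        · exact Or.inr ⟨i, rfl⟩
      symm := by
        constructor
        rintro x y (⟨i, rfl, rfl⟩ | ⟨i, rfl, rfl⟩)
        · exact Or.inr ⟨i, rfl, rfl⟩
        · exact Or.inl ⟨i, rfl, rfl⟩
    }, ?_, ?_⟩
    · intro v hv
      rcases hv with ⟨i, rfl⟩ | ⟨i, rfl⟩
      · refine ⟨Sum.inr (ν i), Or.inl ⟨i, rfl, rfl⟩, ?_⟩
        rintro w (⟨i', h1, rfl⟩ | ⟨i', h1, h2⟩)
        · obtain rfl : i = i' := by injection h1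
          rfl
        · exact absurd h2 (by simp)
      · refine ⟨Sum.inl i, Or.inr ⟨i, rfl, rfl⟩, ?_⟩
        rintro w (⟨i', h1, h2⟩ | ⟨i', rfl, h2⟩)
        · exact absurd h1 (by simp)
        · obtain rfl : i = i' := by
            have : ν i = ν i' := by injection h2
            exact hνinj this
          rfl
    · intro i
      exact Or.inl ⟨i, rfl⟩
end

section
/- A sequence d_1, d_2, ..., d_n of non-negative integers is the degree sequence of some simple graph if and only if Σ d_i is even and for every subset I ⊆ {1,...,n}, Σ_{i∈I} d_i ≤ |I|(|I|-1) + Σ_{i∉I} min(d_i, |I|). -/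
open SimpleGraph

open Finset

private lemma degN_eq_ncard {V : Type*} (G : SimpleGraph V) (v : V) :
    G.degN v = (G.neighborSet v).ncard := rfl

lemma degN_eq_degree {V : Type*} [Fintype V] (G : SimpleGraph V) [DecidableRel G.Adj] (v : V) :
    G.degN v = G.degree v := by
  rw [degN_eq_ncard, ← SimpleGraph.card_neighborFinset_eq_degree, neighborFinset,
    Set.ncard_eq_toFinset_card']

/-- Necessity: even sum. -/
lemma even_sum_degN {n : ℕ} (G : SimpleGraph (Fin n)) : Even (∑ i, G.degN i) := by
  classical
  have : ∀ i, G.degN i = G.degree i := fun i => degN_eq_degree G i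
  simp only [this]
  rw [SimpleGraph.sum_degrees_eq_twice_card_edges]
  exact even_two_mul _

/-- Necessity: the subset inequality. -/
lemma subset_ineq_of_graph {n : ℕ} (G : SimpleGraph (Fin n)) (I : Finset (Fin n)) :
    ∑ i ∈ I, G.degN i ≤ I.card * (I.card - 1) + ∑ i ∈ Iᶜ, min (G.degN i) I.card := by
  classical
  simp only [degN_eq_degree]
  have hdeg : ∀ i, G.degree i = (G.neighborFinset i ∩ I).card + (G.neighborFinset i \ I).card := by
    intro i
    rw [Finset.card_inter_add_card_sdiff, SimpleGraph.card_neighborFinset_eq_degree]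
  calc ∑ i ∈ I, G.degree i
      = ∑ i ∈ I, (G.neighborFinset i ∩ I).card + ∑ i ∈ I, (G.neighborFinset i \ I).card := by
        simp only [hdeg]; rw [Finset.sum_add_distrib]
    _ ≤ I.card * (I.card - 1) + ∑ i ∈ Iᶜ, min (G.degree i) I.card := by
        have h1 : ∑ i ∈ I, (G.neighborFinset i ∩ I).card ≤ I.card * (I.card - 1) := by
          have : ∀ i ∈ I, (G.neighborFinset i ∩ I).card ≤ I.card - 1 := by
            intro i hi
            have hsub : G.neighborFinset i ∩ I ⊆ I.erase i := by
              intro j hj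
              simp only [Finset.mem_inter, SimpleGraph.mem_neighborFinset] at hj
              exact Finset.mem_erase.2 ⟨fun h => G.irrefl (h ▸ hj.1), hj.2⟩
            calc (G.neighborFinset i ∩ I).card ≤ (I.erase i).card := Finset.card_le_card hsub
              _ = I.card - 1 := Finset.card_erase_of_mem hi
          calc ∑ i ∈ I, (G.neighborFinset i ∩ I).card ≤ ∑ _i ∈ I, (I.card - 1) :=
                Finset.sum_le_sum this
            _ = I.card * (I.card - 1) := by rw [Finset.sum_const, smul_eq_mul]
        have h2 : ∑ i ∈ I, (G.neighborFinset i \ I).card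
            ≤ ∑ j ∈ Iᶜ, min (G.degree j) I.card := by
          have hrw : ∀ i, G.neighborFinset i \ I = Iᶜ.filter (fun j => G.Adj i j) := by
            intro i
            ext j
            simp [Finset.mem_sdiff, SimpleGraph.mem_neighborFinset, Finset.mem_filter, and_comm]
          calc ∑ i ∈ I, (G.neighborFinset i \ I).card
              = ∑ i ∈ I, ∑ j ∈ Iᶜ, (if G.Adj i j then 1 else 0) := by
                simp only [hrw]
                refine Finset.sum_congr rfl fun i _ => ?_
                rw [Finset.card_filter]
            _ = ∑ j ∈ Iᶜ, ∑ i ∈ I, (if G.Adj i j then 1 else 0) := Finset.sum_comm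
            _ ≤ ∑ j ∈ Iᶜ, min (G.degree j) I.card := by
                refine Finset.sum_le_sum fun j _ => ?_
                have : ∑ i ∈ I, (if G.Adj i j then 1 else 0) = (I.filter (fun i => G.Adj i j)).card := by
                  rw [Finset.card_filter]
                rw [this]
                refine le_min ?_ (Finset.card_le_card (Finset.filter_subset _ _))
                rw [← SimpleGraph.card_neighborFinset_eq_degree]
                refine Finset.card_le_card fun i hi => ?_
                simp only [Finset.mem_filter] at hi
                exact (SimpleGraph.mem_neighborFinset _ _ _).2 hi.2.symm
        exact Nat.add_le_add h1 h2

/-- Transport a graph along an equivalence. -/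
def transpGraph {V W : Type*} (G : SimpleGraph V) (e : V ≃ W) : SimpleGraph W where
  Adj x y := G.Adj (e.symm x) (e.symm y)
  symm := ⟨fun x y h => G.adj_symm h⟩
  loopless := ⟨fun x h => G.irrefl h⟩

lemma degN_transp {V W : Type*} (G : SimpleGraph V) (e : V ≃ W) (x : W) :
    (transpGraph G e).degN x = G.degN (e.symm x) := by
  show ({y | G.Adj (e.symm x) (e.symm y)} : Set W).ncard = _
  have : {y | G.Adj (e.symm x) (e.symm y)} = e '' {y | G.Adj (e.symm x) y} := by
    rw [Equiv.image_eq_preimage_symm]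
    rfl
  rw [this, Set.ncard_image_of_injective _ e.injective]
  rfl

/-- Add an isolated vertex at `Fin.last`. -/
def extGraph {m : ℕ} (G : SimpleGraph (Fin m)) : SimpleGraph (Fin (m + 1)) where
  Adj x y := ∃ a b : Fin m, G.Adj a b ∧ x = a.castSucc ∧ y = b.castSucc
  symm := ⟨by rintro x y ⟨a, b, h, rfl, rfl⟩; exact ⟨b, a, h.symm, rfl, rfl⟩⟩
  loopless := ⟨by
    rintro x ⟨a, b, h, rfl, hab⟩
    cases Fin.castSucc_inj.1 hab
    exact G.irrefl h⟩

lemma extGraph_degN_last {m : ℕ} (G : SimpleGraph (Fin m)) :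
    (extGraph G).degN (Fin.last m) = 0 := by
  have : {w | (extGraph G).Adj (Fin.last m) w} = ∅ := by
    ext w
    simp only [Set.mem_setOf_eq, Set.mem_empty_iff_false, iff_false]
    rintro ⟨a, b, _, ha, _⟩
    exact absurd ha.symm (Fin.ne_last_of_lt a.castSucc_lt_last)
  show Set.ncard _ = 0
  rw [this, Set.ncard_empty]

lemma extGraph_degN_castSucc {m : ℕ} (G : SimpleGraph (Fin m)) (a : Fin m) :
    (extGraph G).degN a.castSucc = G.degN a := by
  have : {w | (extGraph G).Adj a.castSucc w} = Fin.castSucc '' {w | G.Adj a w} := by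
    ext w
    simp only [Set.mem_setOf_eq, Set.mem_image]
    constructor
    · rintro ⟨a', b, h, ha, rfl⟩
      exact ⟨b, by rwa [Fin.castSucc_inj.1 ha], rfl⟩
    · rintro ⟨b, h, rfl⟩
      exact ⟨a, b, h, rfl, rfl⟩
  show Set.ncard _ = _
  rw [this, Set.ncard_image_of_injective _ (Fin.castSucc_injective m)]
  rfl

section Surgery
variable {V : Type*} [Fintype V]

lemma ncard_insert_notmem {s : Set V} {a : V} (h : a ∉ s) :
    (insert a s).ncard = s.ncard + 1 :=
  Set.ncard_insert_of_notMem h s.toFinite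

/-- Adding an edge between nonadjacent vertices. -/
lemma addEdge_surgery (G : SimpleGraph V) (u v : V) (huv : u ≠ v) (hadj : ¬ G.Adj u v) :
    ∃ G' : SimpleGraph V, G'.degN u = G.degN u + 1 ∧ G'.degN v = G.degN v + 1 ∧
      ∀ x, x ≠ u → x ≠ v → G'.degN x = G.degN x := by
  set G' := SimpleGraph.fromRel (fun x z => G.Adj x z ∨ (x = u ∧ z = v)) with hG'
  have hadj' : ∀ x z, G'.Adj x z ↔ (x ≠ z ∧ ((G.Adj x z ∨ (x = u ∧ z = v)) ∨
      (G.Adj z x ∨ (z = u ∧ x = v)))) := by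
    intro x z; rw [hG']; exact SimpleGraph.fromRel_adj _ x z
  have hNu : G'.neighborSet u = insert v (G.neighborSet u) := by
    ext z
    simp only [SimpleGraph.mem_neighborSet, Set.mem_insert_iff, hadj']
    have h1 : G.Adj u z → u ≠ z := G.ne_of_adj
    have h2 : G.Adj z u → G.Adj u z := fun h => h.symm
    constructor
    · tauto
    · rintro (rfl | h)
      · tauto
      · tauto
  have hNv : G'.neighborSet v = insert u (G.neighborSet v) := by
    ext z
    simp only [SimpleGraph.mem_neighborSet, Set.mem_insert_iff, hadj']
    have h1 : G.Adj v z → v ≠ z := G.ne_of_adj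
    have h2 : G.Adj z v → G.Adj v z := fun h => h.symm
    have h3 : ¬ G.Adj v u := fun h => hadj h.symm
    have h4 : v ≠ u := huv.symm
    constructor
    · tauto
    · rintro (rfl | h) <;> tauto
  have hNx : ∀ x, x ≠ u → x ≠ v → G'.neighborSet x = G.neighborSet x := by
    intro x hxu hxv
    ext z
    simp only [SimpleGraph.mem_neighborSet, hadj']
    have h1 : G.Adj x z → x ≠ z := G.ne_of_adj
    have h2 : G.Adj z x → G.Adj x z := fun h => h.symm
    constructor
    · tauto
    · tauto
  refine ⟨G', ?_, ?_, ?_⟩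
  · rw [degN_eq_ncard, degN_eq_ncard, hNu, ncard_insert_notmem (by simpa using hadj)]
  · rw [degN_eq_ncard, degN_eq_ncard, hNv,
      ncard_insert_notmem (by simp only [SimpleGraph.mem_neighborSet]; exact fun h => hadj h.symm)]
  · intro x hxu hxv
    rw [degN_eq_ncard, degN_eq_ncard, hNx x hxu hxv]
/-- The 2-switch: remove edge w-y, add edges u-w and v-y. -/
lemma swap_surgery (G : SimpleGraph V) (u v w y : V)
    (huv : u ≠ v) (huw : u ≠ w) (huy : u ≠ y) (hvw : v ≠ w) (hvy : v ≠ y) (hwy : w ≠ y)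
    (hauw : ¬ G.Adj u w) (havy : ¬ G.Adj v y) (hawy : G.Adj w y) :
    ∃ G' : SimpleGraph V, G'.degN u = G.degN u + 1 ∧ G'.degN v = G.degN v + 1 ∧
      ∀ x, x ≠ u → x ≠ v → G'.degN x = G.degN x := by
  set G' := SimpleGraph.fromRel (fun x z =>
      (G.Adj x z ∧ ¬((x = w ∧ z = y) ∨ (x = y ∧ z = w))) ∨ (x = u ∧ z = w) ∨ (x = v ∧ z = y))
    with hG'
  have hadj' : ∀ x z, G'.Adj x z ↔ (x ≠ z ∧
      (((G.Adj x z ∧ ¬((x = w ∧ z = y) ∨ (x = y ∧ z = w))) ∨ (x = u ∧ z = w) ∨ (x = v ∧ z = y)) ∨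
       ((G.Adj z x ∧ ¬((z = w ∧ x = y) ∨ (z = y ∧ x = w))) ∨ (z = u ∧ x = w) ∨ (z = v ∧ x = y)))) := by
    intro x z; rw [hG']; exact SimpleGraph.fromRel_adj _ x z
  have hAu : ∀ z, G'.Adj u z ↔ (z = w ∨ G.Adj u z) := by
    intro z
    rw [hadj' u z]
    constructor
    · rintro ⟨hnz, (⟨h, -⟩ | ⟨-, rfl⟩ | ⟨h, -⟩) | (⟨h, -⟩ | ⟨-, h⟩ | ⟨-, h⟩)⟩
      · exact Or.inr h
      · exact Or.inl rfl
      · exact absurd h huv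
      · exact Or.inr h.symm
      · exact absurd h huw
      · exact absurd h huy
    · rintro (rfl | h)
      · exact ⟨huw, Or.inl (Or.inr (Or.inl ⟨rfl, rfl⟩))⟩
      · refine ⟨G.ne_of_adj h, Or.inl (Or.inl ⟨h, ?_⟩)⟩
        rintro (⟨h1, -⟩ | ⟨h1, -⟩)
        exacts [huw h1, huy h1]
  have hAv : ∀ z, G'.Adj v z ↔ (z = y ∨ G.Adj v z) := by
    intro z
    rw [hadj' v z]
    constructor
    · rintro ⟨hnz, (⟨h, -⟩ | ⟨h, -⟩ | ⟨-, rfl⟩) | (⟨h, -⟩ | ⟨-, h⟩ | ⟨-, h⟩)⟩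
      · exact Or.inr h
      · exact absurd h huv.symm
      · exact Or.inl rfl
      · exact Or.inr h.symm
      · exact absurd h hvw
      · exact absurd h hvy
    · rintro (rfl | h)
      · exact ⟨hvy, Or.inl (Or.inr (Or.inr ⟨rfl, rfl⟩))⟩
      · refine ⟨G.ne_of_adj h, Or.inl (Or.inl ⟨h, ?_⟩)⟩
        rintro (⟨h1, -⟩ | ⟨h1, -⟩)
        exacts [hvw h1, hvy h1]
  have hAw : ∀ z, G'.Adj w z ↔ (z = u ∨ (G.Adj w z ∧ z ≠ y)) := by
    intro z
    rw [hadj' w z]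
    constructor
    · rintro ⟨hnz, (⟨h, hcl⟩ | ⟨h, -⟩ | ⟨h, -⟩) | (⟨h, hcl⟩ | ⟨h, -⟩ | ⟨-, h⟩)⟩
      · exact Or.inr ⟨h, fun hzy => hcl (Or.inl ⟨rfl, hzy⟩)⟩
      · exact absurd h huw.symm
      · exact absurd h hvw.symm
      · exact Or.inr ⟨h.symm, fun hzy => hcl (Or.inr ⟨hzy, rfl⟩)⟩
      · exact Or.inl h
      · exact absurd h (fun hh => hwy hh)
    · rintro (rfl | ⟨h, hzy⟩)
      · exact ⟨huw.symm, Or.inr (Or.inr (Or.inl ⟨rfl, rfl⟩))⟩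
      · refine ⟨G.ne_of_adj h, Or.inl (Or.inl ⟨h, ?_⟩)⟩
        rintro (⟨-, h1⟩ | ⟨h1, -⟩)
        exacts [hzy h1, hwy h1]
  have hAy : ∀ z, G'.Adj y z ↔ (z = v ∨ (G.Adj y z ∧ z ≠ w)) := by
    intro z
    rw [hadj' y z]
    constructor
    · rintro ⟨hnz, (⟨h, hcl⟩ | ⟨h, -⟩ | ⟨h, -⟩) | (⟨h, hcl⟩ | ⟨-, h⟩ | ⟨h, -⟩)⟩
      · exact Or.inr ⟨h, fun hzw => hcl (Or.inr ⟨rfl, hzw⟩)⟩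
      · exact absurd h huy.symm
      · exact absurd h hvy.symm
      · exact Or.inr ⟨h.symm, fun hzw => hcl (Or.inl ⟨hzw, rfl⟩)⟩
      · exact absurd h (fun hh => hwy hh.symm)
      · exact Or.inl h
    · rintro (rfl | ⟨h, hzw⟩)
      · exact ⟨Ne.symm hvy, Or.inr (Or.inr (Or.inr ⟨rfl, rfl⟩))⟩
      · refine ⟨G.ne_of_adj h, Or.inl (Or.inl ⟨h, ?_⟩)⟩
        rintro (⟨h1, -⟩ | ⟨-, h1⟩)
        exacts [hwy h1.symm, hzw h1]
  have hAx : ∀ x z, x ≠ u → x ≠ v → x ≠ w → x ≠ y → (G'.Adj x z ↔ G.Adj x z) := by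
    intro x z hxu hxv hxw hxy
    rw [hadj' x z]
    constructor
    · rintro ⟨hnz, (⟨h, -⟩ | ⟨h, -⟩ | ⟨h, -⟩) | (⟨h, -⟩ | ⟨-, h⟩ | ⟨-, h⟩)⟩
      · exact h
      · exact absurd h hxu
      · exact absurd h hxv
      · exact h.symm
      · exact absurd h hxw
      · exact absurd h hxy
    · intro h
      refine ⟨G.ne_of_adj h, Or.inl (Or.inl ⟨h, ?_⟩)⟩
      rintro (⟨h1, -⟩ | ⟨h1, -⟩)
      exacts [hxw h1, hxy h1]
  have hNu : G'.neighborSet u = insert w (G.neighborSet u) := by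
    ext z; simp only [SimpleGraph.mem_neighborSet, Set.mem_insert_iff]; exact hAu z
  have hNv : G'.neighborSet v = insert y (G.neighborSet v) := by
    ext z; simp only [SimpleGraph.mem_neighborSet, Set.mem_insert_iff]; exact hAv z
  have hNw : G'.neighborSet w = insert u ((G.neighborSet w) \ {y}) := by
    ext z
    simp only [SimpleGraph.mem_neighborSet, Set.mem_insert_iff, Set.mem_diff,
      Set.mem_singleton_iff]
    exact hAw z
  have hNy : G'.neighborSet y = insert v ((G.neighborSet y) \ {w}) := by
    ext z
    simp only [SimpleGraph.mem_neighborSet, Set.mem_insert_iff, Set.mem_diff,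
      Set.mem_singleton_iff]
    exact hAy z
  have hNx : ∀ x, x ≠ u → x ≠ v → x ≠ w → x ≠ y → G'.neighborSet x = G.neighborSet x := by
    intro x hxu hxv hxw hxy
    ext z; simp only [SimpleGraph.mem_neighborSet]; exact hAx x z hxu hxv hxw hxy
  have hwmem : w ∉ G.neighborSet u := hauw
  have hymem : y ∉ G.neighborSet v := havy
  have hymem' : y ∈ G.neighborSet w := hawy
  have hwmem' : w ∈ G.neighborSet y := hawy.symm
  refine ⟨G', ?_, ?_, ?_⟩
  · rw [degN_eq_ncard, degN_eq_ncard, hNu, ncard_insert_notmem hwmem]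
  · rw [degN_eq_ncard, degN_eq_ncard, hNv, ncard_insert_notmem hymem]
  · intro x hxu hxv
    by_cases hxw : x = w
    · rw [degN_eq_ncard, degN_eq_ncard, hxw, hNw, ncard_insert_notmem
        (by simp only [Set.mem_diff]; exact fun h => hauw h.1.symm),
        Set.ncard_diff_singleton_of_mem hymem']
      have : 0 < (G.neighborSet w).ncard := (Set.ncard_pos (Set.toFinite _)).2 ⟨y, hymem'⟩
      omega
    by_cases hxy : x = y
    · rw [degN_eq_ncard, degN_eq_ncard, hxy, hNy, ncard_insert_notmem
        (by simp only [Set.mem_diff]; exact fun h => havy h.1.symm),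
        Set.ncard_diff_singleton_of_mem hwmem']
      have : 0 < (G.neighborSet y).ncard := (Set.ncard_pos (Set.toFinite _)).2 ⟨w, hwmem'⟩
      omega
    · rw [degN_eq_ncard, degN_eq_ncard, hNx x hxu hxv hxw hxy]
/-- Main surgery: increase the degrees of `u` and `v` by one each. -/
lemma surgery (G : SimpleGraph V) (u v : V) (huv : u ≠ v)
    (hcard : G.degN u + 1 < Fintype.card V)
    (hmin : ∀ w, w ≠ u → w ≠ v → ¬ G.Adj u w → G.degN v < G.degN w) :
    ∃ G' : SimpleGraph V, G'.degN u = G.degN u + 1 ∧ G'.degN v = G.degN v + 1 ∧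
      ∀ x, x ≠ u → x ≠ v → G'.degN x = G.degN x := by
  by_cases hadj : G.Adj u v
  · -- find w with w ≠ u, ¬ Adj u w
    have hw : ∃ w, w ≠ u ∧ ¬ G.Adj u w := by
      by_contra h
      push_neg at h
      have hsub : Set.univ ⊆ insert u (G.neighborSet u) := by
        intro z _
        rcases eq_or_ne z u with rfl | hz
        · exact Set.mem_insert _ _
        · exact Set.mem_insert_of_mem _ (h z hz)
      have h1 : (Set.univ : Set V).ncard ≤ G.degN u + 1 :=
        le_trans (Set.ncard_le_ncard hsub (Set.toFinite _)) (Set.ncard_insert_le _ _)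
      rw [Set.ncard_univ, Nat.card_eq_fintype_card] at h1
      omega
    obtain ⟨w, hwu, hauw⟩ := hw
    have hwv : w ≠ v := fun h => hauw (h ▸ hadj)
    have hdvw : G.degN v < G.degN w := hmin w hwu hwv hauw
    have hwu' : u ∉ G.neighborSet w := fun h => hauw (SimpleGraph.mem_neighborSet _ _ _ |>.1 h).symm
    -- find y ∈ N(w), y ∉ N(v), y ≠ v
    have hy : ∃ y, G.Adj w y ∧ ¬ G.Adj v y ∧ y ≠ v := by
      by_contra h
      push_neg at h
      have hsub : G.neighborSet w \ {v} ⊆ G.neighborSet v \ {u, w} := by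
        intro z hz
        obtain ⟨hz1, hz2⟩ := hz
        have hz2' : z ≠ v := hz2
        refine ⟨by by_contra hna; exact hz2' (h z hz1 hna), ?_⟩
        simp only [Set.mem_insert_iff, Set.mem_singleton_iff]
        rintro (rfl | rfl)
        · exact hwu' hz1
        · exact G.irrefl hz1
      have h1 : (G.neighborSet w).ncard ≤ (G.neighborSet w \ {v}).ncard + 1 := by
        have : G.neighborSet w ⊆ insert v (G.neighborSet w \ {v}) := by
          intro z hz
          rcases eq_or_ne z v with rfl | hz'
          · exact Set.mem_insert _ _
          · exact Set.mem_insert_of_mem _ ⟨hz, hz'⟩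
        exact le_trans (Set.ncard_le_ncard this (Set.toFinite _)) (Set.ncard_insert_le _ _)
      have h2 : (G.neighborSet w \ {v}).ncard ≤ (G.neighborSet v \ {u}).ncard :=
        Set.ncard_le_ncard (hsub.trans (Set.diff_subset_diff_right (by simp))) (Set.toFinite _)
      have h3 : (G.neighborSet v \ {u}).ncard = (G.neighborSet v).ncard - 1 :=
        Set.ncard_diff_singleton_of_mem (by exact hadj.symm)
      have h4 : 0 < (G.neighborSet v).ncard :=
        (Set.ncard_pos (Set.toFinite _)).2 ⟨u, hadj.symm⟩
      rw [degN_eq_ncard, degN_eq_ncard] at hdvw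
      omega
    obtain ⟨y, hawy, havy, hyv⟩ := hy
    have hyu : y ≠ u := fun h => hwu' (h ▸ (SimpleGraph.mem_neighborSet _ _ _ |>.2 hawy))
    have hwy : w ≠ y := G.ne_of_adj hawy
    exact swap_surgery G u v w y huv hwu.symm hyu.symm hwv.symm hyv.symm hwy hauw havy hawy
  · exact addEdge_surgery G u v huv hadj
end Surgery

section Helpers
variable {n k c : ℕ}

/-- number of indices below k -/
lemma sum_ite_lt_const (hk : k ≤ n) (c : ℕ) :
    ∑ i : Fin n, (if (i : ℕ) < k then c else 0) = k * c := by
  rw [Fin.sum_univ_eq_sum_range (fun j => if j < k then c else 0)]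
  rw [← Finset.sum_filter]
  have : (Finset.range n).filter (fun j => j < k) = Finset.range k := by
    ext j; simp only [Finset.mem_filter, Finset.mem_range]; omega
  rw [this, Finset.sum_const, Finset.card_range, smul_eq_mul]

lemma sum_ite_eq_single (hk : k < n) (f : Fin n → ℕ) :
    ∑ i : Fin n, (if (i : ℕ) = k then f i else 0) = f ⟨k, hk⟩ := by
  rw [Finset.sum_eq_single ⟨k, hk⟩]
  · simp
  · intro b _ hb
    have : (b : ℕ) ≠ k := fun h => hb (Fin.ext h)
    simp [this]
  · simp

lemma sum_ite_le_const (hc : c ≤ n) :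
    ∑ i : Fin n, (if c ≤ (i : ℕ) then 1 else 0) = n - c := by
  rw [Fin.sum_univ_eq_sum_range (fun j => if c ≤ j then 1 else 0)]
  rw [← Finset.sum_filter]
  have : (Finset.range n).filter (fun j => c ≤ j) = Finset.Ico c n := by
    ext j; simp only [Finset.mem_filter, Finset.mem_range, Finset.mem_Ico]; omega
  rw [this, Finset.sum_const, Nat.card_Ico, smul_eq_mul, mul_one]
end Helpers

/-- prefix sum -/
def Spre (n : ℕ) (d : Fin n → ℕ) (k : ℕ) : ℕ := ∑ i : Fin n, if (i : ℕ) < k then d i else 0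
/-- capped suffix sum -/
def Mpre (n : ℕ) (d : Fin n → ℕ) (k : ℕ) : ℕ := ∑ i : Fin n, if k ≤ (i : ℕ) then min (d i) k else 0


lemma realize_sorted : ∀ N : ℕ, ∀ n : ℕ, ∀ d : Fin n → ℕ,
    n + (∑ i, d i) ≤ N → Antitone d → Even (∑ i, d i) →
    (∀ k, k ≤ n → Spre n d k ≤ k * (k - 1) + Mpre n d k) →
    ∃ G : SimpleGraph (Fin n), ∀ i, G.degN i = d i := by
  intro N
  induction N with
  | zero =>
    intro n d hN _ _ _
    have hn : n = 0 := by omega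
    subst hn
    exact ⟨⊥, fun i => i.elim0⟩
  | succ N ih =>
    intro n d hN hAnti hEven hEG
    rcases n with _ | m
    · exact ⟨⊥, fun i => i.elim0⟩
    · by_cases hz : d (Fin.last m) = 0
      · -- strip the last (zero) entry
        set d' : Fin m → ℕ := fun i => d i.castSucc with hd'
        have hsum : ∑ i : Fin (m+1), d i = ∑ i : Fin m, d' i := by
          rw [Fin.sum_univ_castSucc]
          simp [hz, hd']
        have hA' : Antitone d' := fun i j hij =>
          hAnti (Fin.castSucc_le_castSucc_iff.2 hij)
        have hS' : ∀ k, k ≤ m → Spre m d' k = Spre (m+1) d k := by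
          intro k hk
          rw [Spre, Spre, Fin.sum_univ_castSucc]
          have : ¬ ((Fin.last m : Fin (m+1)) : ℕ) < k := by rw [Fin.val_last]; omega
          simp only [this, if_false, add_zero, Fin.coe_castSucc]
          rfl
        have hM' : ∀ k, k ≤ m → Mpre m d' k = Mpre (m+1) d k := by
          intro k hk
          rw [Mpre, Mpre, Fin.sum_univ_castSucc]
          simp only [Fin.val_last, hz, Fin.coe_castSucc]
          rw [if_pos hk]
          simp
          rfl
        obtain ⟨G, hG⟩ := ih m d' (by omega) hA' (by rwa [← hsum])
          (fun k hk => by rw [hS' k hk, hM' k hk]; exact hEG k (by omega))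
        refine ⟨extGraph G, fun i => ?_⟩
        induction i using Fin.lastCases with
        | last => rw [extGraph_degN_last, hz]
        | cast a => rw [extGraph_degN_castSucc, hG a]
      · -- all degrees positive
        have hd0 : ∀ i, 1 ≤ d i := by
          intro i
          have := hAnti (Fin.le_last i)
          omega
        -- m = 0 is impossible
        rcases Nat.eq_zero_or_pos m with rfl | hm
        · exfalso
          have h1 := hEG 1 (by omega)
          have hS1 : Spre 1 d 1 = d 0 := by
            rw [Spre]
            simp [Fin.sum_univ_one]
          have hM1 : Mpre 1 d 1 = 0 := by
            rw [Mpre]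
            simp [Fin.sum_univ_one]
          rw [hS1, hM1] at h1
          have := hd0 0
          omega
        -- now m ≥ 1, all degrees ≥ 1
        set D := d 0 with hD
        set lst : Fin (m+1) := Fin.last m with hlst
        set B : Finset (Fin (m+1)) := Finset.univ.filter (fun i => (i : ℕ) < m ∧ d i = D) with hB
        have hBne : B.Nonempty := ⟨0, by simp [hB]; omega⟩
        set P : Fin (m+1) := B.max' hBne with hP
        have hPmem : P ∈ B := B.max'_mem hBne
        have hPlt : (P : ℕ) < m := by
          have := Finset.mem_filter.1 hPmem
          exact this.2.1
        have hPD : d P = D := (Finset.mem_filter.1 hPmem).2.2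
        have hPlast : P ≠ lst := by
          intro h
          rw [hlst] at h
          have : (P : ℕ) = m := by rw [h, Fin.val_last]
          omega
        have hprefix : ∀ i : Fin (m+1), (i : ℕ) ≤ (P : ℕ) → d i = D := by
          intro i hi
          have h1 : d P ≤ d i := hAnti (by rwa [Fin.le_def])
          have h2 : d i ≤ d 0 := hAnti (Fin.zero_le i)
          omega
        have hafter : ∀ i : Fin (m+1), (P : ℕ) < (i : ℕ) → (i : ℕ) < m → d i < D := by
          intro i h1 h2
          have hne : d i ≠ D := by
            intro hdi
            have : i ∈ B := Finset.mem_filter.2 ⟨Finset.mem_univ _, h2, hdi⟩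
            have := Finset.le_max' B i this
            rw [← hP] at this
            rw [Fin.le_def] at this
            omega
          have : d i ≤ d 0 := hAnti (Fin.zero_le i)
          omega
        set d' : Fin (m+1) → ℕ :=
          Function.update (Function.update d P (d P - 1)) lst (d lst - 1) with hd'def
        have hd'P : d' P = d P - 1 := by
          rw [hd'def, Function.update_of_ne hPlast, Function.update_self]
        have hd'last : d' lst = d lst - 1 := by
          rw [hd'def, Function.update_self]
        have hd'x : ∀ x, x ≠ P → x ≠ lst → d' x = d x := by
          intro x h1 h2
          rw [hd'def, Function.update_of_ne h2, Function.update_of_ne h1]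
        have hsum2 : ∑ i : Fin (m+1), d i = (∑ i : Fin (m+1), d' i) + 2 := by
          have e1 : ∑ i : Fin (m+1), d i
              = d lst + (d P + ∑ i ∈ (Finset.univ.erase lst).erase P, d i) := by
            rw [Finset.add_sum_erase _ d (Finset.mem_erase.2 ⟨hPlast, Finset.mem_univ _⟩),
              Finset.add_sum_erase _ d (Finset.mem_univ lst)]
          have e2 : ∑ i : Fin (m+1), d' i
              = d' lst + (d' P + ∑ i ∈ (Finset.univ.erase lst).erase P, d' i) := by
            rw [Finset.add_sum_erase _ d' (Finset.mem_erase.2 ⟨hPlast, Finset.mem_univ _⟩),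
              Finset.add_sum_erase _ d' (Finset.mem_univ lst)]
          have e3 : ∑ i ∈ (Finset.univ.erase lst).erase P, d' i
              = ∑ i ∈ (Finset.univ.erase lst).erase P, d i := by
            refine Finset.sum_congr rfl fun i hi => ?_
            obtain ⟨hiP, hi2⟩ := Finset.mem_erase.1 hi
            obtain ⟨hilst, _⟩ := Finset.mem_erase.1 hi2
            exact hd'x i hiP hilst
          rw [e1, e2, e3, hd'P, hd'last]
          have := hd0 P
          have := hd0 lst
          omega
        have hEven' : Even (∑ i : Fin (m+1), d' i) := by
          obtain ⟨t, ht⟩ := hEven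
          exact ⟨t - 1, by omega⟩
        have hA' : Antitone d' := by
          intro i j hij
          rw [Fin.le_def] at hij
          by_cases hjl : j = lst
          · subst hjl
            rw [hd'last]
            by_cases hil : i = lst
            · subst hil; rw [hd'last]
            by_cases hiP : i = P
            · subst hiP
              rw [hd'P]
              have hq := hAnti (Fin.le_last P)
              rw [← hlst] at hq
              omega
            · rw [hd'x i hiP hil]
              have hq := hAnti (Fin.le_last i)
              rw [← hlst] at hq
              omega
          by_cases hjP : j = P
          · subst hjP
            rw [hd'P]
            by_cases hiP : i = P
            · subst hiP; rw [hd'P]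
            · have hilst : i ≠ lst := by
                intro h; subst h
                rw [hlst, Fin.val_last] at hij
                omega
              rw [hd'x i hiP hilst, hprefix i (by omega), ← hPD]
              omega
          · rw [hd'x j hjP hjl]
            have hjm : (j : ℕ) < m := by
              rcases Nat.lt_or_ge (j : ℕ) m with h | h
              · exact h
              · exfalso; exact hjl (Fin.ext (by rw [hlst, Fin.val_last]; omega))
            by_cases hiP : i = P
            · subst hiP
              rw [hd'P, hPD]
              have : d j < D := hafter j (by omega) hjm
              omega
            · by_cases hil : i = lst
              · exfalso
                subst hil
                rw [hlst, Fin.val_last] at hij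
                have : (j : ℕ) = m := by
                  have := j.isLt; omega
                exact hjl (Fin.ext (by rw [hlst, Fin.val_last]; omega))
              · rw [hd'x i hiP hil]
                exact hAnti (by rwa [Fin.le_def])
        -- the Erdős–Gallai conditions persist
        have hd'le : ∀ i, d' i ≤ d i := by
          intro i
          by_cases h1 : i = P
          · subst h1; rw [hd'P]; omega
          by_cases h2 : i = lst
          · subst h2; rw [hd'last]; omega
          · rw [hd'x i h1 h2]
        have hd'ge : ∀ i, d i - 1 ≤ d' i := by
          intro i
          by_cases h1 : i = P
          · subst h1; rw [hd'P]
          by_cases h2 : i = lst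
          · subst h2; rw [hd'last]
          · rw [hd'x i h1 h2]; omega
        have hdlstle : ∀ i, d lst ≤ d i := by
          intro i
          have hq := hAnti (Fin.le_last i)
          rwa [← hlst] at hq
        have hdleD : ∀ i, d i ≤ D := by
          intro i
          have hq := hAnti (Fin.zero_le i)
          rw [hD]
          exact hq
        have hvallst : (lst : ℕ) = m := by rw [hlst, Fin.val_last]
        have hEG' : ∀ k, k ≤ m + 1 → Spre (m+1) d' k ≤ k * (k - 1) + Mpre (m+1) d' k := by
          intro k hk
          rcases Nat.eq_zero_or_pos k with rfl | hk1
          · have h0 : Spre (m+1) d' 0 = 0 := by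
              rw [Spre]; simp
            rw [h0]; omega
          by_cases hkn : k = m + 1
          · subst hkn
            have hSful : ∀ f : Fin (m+1) → ℕ, Spre (m+1) f (m+1) = ∑ i, f i := by
              intro f
              rw [Spre]
              exact Finset.sum_congr rfl fun i _ => if_pos i.isLt
            have h := hEG (m+1) le_rfl
            rw [hSful d] at h
            rw [hSful d']
            set q := (m+1) * ((m+1) - 1) with hq
            have hMd : Mpre (m+1) d (m+1) = 0 := by
              rw [Mpre]
              refine Finset.sum_eq_zero fun i _ => ?_
              rw [if_neg (by have := i.isLt; omega)]
            rw [hMd] at h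
            omega
          have hkm : k ≤ m := by omega
          by_cases hBk : (P : ℕ) < k
          · -- case B : P inside the prefix
            have key1 : Spre (m+1) d k = Spre (m+1) d' k + 1 := by
              have hpt : ∀ i : Fin (m+1), (if (i:ℕ) < k then d i else 0)
                  = (if (i:ℕ) < k then d' i else 0) + (if i = P then 1 else 0) := by
                intro i
                by_cases hiP : i = P
                · subst hiP
                  rw [if_pos rfl, if_pos hBk, if_pos hBk, hd'P]
                  have := hd0 P
                  omega
                · rw [if_neg hiP, add_zero]
                  by_cases hik : (i:ℕ) < k
                  · have hil : i ≠ lst := by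
                      intro h; subst h; omega
                    rw [if_pos hik, if_pos hik, hd'x i hiP hil]
                  · rw [if_neg hik, if_neg hik]
              rw [Spre, Spre, Finset.sum_congr rfl fun i _ => hpt i, Finset.sum_add_distrib,
                Finset.sum_ite_eq' Finset.univ P (fun _ => 1), if_pos (Finset.mem_univ P)]
            have key2 : Mpre (m+1) d k ≤ Mpre (m+1) d' k + 1 := by
              have hpt : ∀ i : Fin (m+1), (if k ≤ (i:ℕ) then min (d i) k else 0)
                  ≤ (if k ≤ (i:ℕ) then min (d' i) k else 0) + (if i = lst then 1 else 0) := by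
                intro i
                by_cases hil : i = lst
                · subst hil
                  rw [if_pos rfl, if_pos (by omega), if_pos (by omega), hd'last]
                  omega
                · rw [if_neg hil, add_zero]
                  by_cases hik : k ≤ (i:ℕ)
                  · have hiP : i ≠ P := by
                      intro h; subst h; omega
                    rw [if_pos hik, if_pos hik, hd'x i hiP hil]
                  · rw [if_neg hik, if_neg hik]
              calc Mpre (m+1) d k ≤ ∑ i : Fin (m+1),
                    ((if k ≤ (i:ℕ) then min (d' i) k else 0) + (if i = lst then 1 else 0)) :=
                  Finset.sum_le_sum fun i _ => hpt i
                _ = Mpre (m+1) d' k + 1 := by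
                  rw [Finset.sum_add_distrib, Finset.sum_ite_eq' Finset.univ lst (fun _ => 1),
                    if_pos (Finset.mem_univ lst), Mpre]
            have h := hEG k (by omega)
            set q := k * (k - 1) with hq
            omega
          · -- case C : k ≤ P
            have hkP : k ≤ (P : ℕ) := by omega
            have hprefd' : ∀ i : Fin (m+1), (i:ℕ) < k → (d' i = D ∧ d i = D) := by
              intro i hik
              have hiP : i ≠ P := by intro h; subst h; omega
              have hil : i ≠ lst := by intro h; subst h; omega
              rw [hd'x i hiP hil]
              exact ⟨hprefix i (by omega), hprefix i (by omega)⟩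
            have hSdk : Spre (m+1) d k = k * D := by
              have hpt : ∀ i : Fin (m+1), (if (i:ℕ) < k then d i else 0)
                  = (if (i:ℕ) < k then D else 0) := by
                intro i
                by_cases hik : (i:ℕ) < k
                · rw [if_pos hik, if_pos hik]; exact (hprefd' i hik).2
                · rw [if_neg hik, if_neg hik]
              rw [Spre, Finset.sum_congr rfl fun i _ => hpt i]
              exact sum_ite_lt_const (by omega) D
            have hSk : Spre (m+1) d' k = k * D := by
              have hpt : ∀ i : Fin (m+1), (if (i:ℕ) < k then d' i else 0)
                  = (if (i:ℕ) < k then D else 0) := by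
                intro i
                by_cases hik : (i:ℕ) < k
                · rw [if_pos hik, if_pos hik]; exact (hprefd' i hik).1
                · rw [if_neg hik, if_neg hik]
              rw [Spre, Finset.sum_congr rfl fun i _ => hpt i]
              exact sum_ite_lt_const (by omega) D
            by_cases hC0 : k + 1 ≤ d lst
            · -- C0 : everything large
              have hMeq : Mpre (m+1) d' k = Mpre (m+1) d k := by
                refine Finset.sum_congr rfl fun i _ => ?_
                by_cases hik : k ≤ (i:ℕ)
                · rw [if_pos hik, if_pos hik]
                  have h1 := hdlstle i
                  have h2 := hd'ge i
                  have h3 := hd'le i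
                  omega
                · rw [if_neg hik, if_neg hik]
              rw [hSk, hMeq]
              have h := hEG k (by omega)
              rw [hSdk] at h
              exact h
            · have hdlst : d lst ≤ k := by omega
              by_cases hC1 : D ≤ k
              · -- C1 : all degrees small
                have hM' : Mpre (m+1) d' k = ∑ i : Fin (m+1), (if k ≤ (i:ℕ) then d' i else 0) := by
                  refine Finset.sum_congr rfl fun i _ => ?_
                  by_cases hik : k ≤ (i:ℕ)
                  · rw [if_pos hik, if_pos hik]
                    have h1 := hd'le i
                    have h2 := hdleD i
                    omega
                  · rw [if_neg hik, if_neg hik]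
                rw [hSk, hM']
                by_cases hDk : D < k
                · have : k * D ≤ k * (k-1) := Nat.mul_le_mul_left k (by omega)
                  omega
                · have hDk' : D = k := by omega
                  have hkk : k * (k-1) + k = k * k := by
                    rcases k with _ | t
                    · omega
                    · simp only [Nat.succ_sub_one]
                      ring
                  suffices hsuf : k ≤ ∑ i : Fin (m+1), (if k ≤ (i:ℕ) then d' i else 0) by
                    have : k * D = k * k := by rw [hDk']
                    omega
                  by_cases hkPlt : k < (P:ℕ)
                  · have hkm1 : k < m + 1 := by omega
                    have hFk : (if k ≤ ((⟨k, hkm1⟩ : Fin (m+1)):ℕ) then d' ⟨k, hkm1⟩ else 0) = k := by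
                      rw [if_pos (le_refl k), hd'x ⟨k, hkm1⟩
                        (by intro h; have := congrArg Fin.val h; simp at this; omega)
                        (by intro h; have := congrArg Fin.val h; rw [hvallst] at this; simp at this; omega),
                        hprefix ⟨k, hkm1⟩ (by simpa using hkP), hDk']
                    have hle : (if k ≤ ((⟨k, hkm1⟩ : Fin (m+1)):ℕ) then d' ⟨k, hkm1⟩ else 0)
                        ≤ ∑ i : Fin (m+1), (if k ≤ (i:ℕ) then d' i else 0) :=
                      Finset.single_le_sum (f := fun i : Fin (m+1) => if k ≤ (i:ℕ) then d' i else 0)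
                        (fun i _ => Nat.zero_le _) (Finset.mem_univ _)
                    omega
                  · have hPk : (P:ℕ) = k := by omega
                    have hFP : (if k ≤ (P:ℕ) then d' P else 0) = k - 1 := by
                      rw [if_pos (by omega), hd'P, hPD, hDk']
                    have e1 : (if k ≤ (P:ℕ) then d' P else 0)
                        + ∑ i ∈ Finset.univ.erase P, (if k ≤ (i:ℕ) then d' i else 0)
                        = ∑ i : Fin (m+1), (if k ≤ (i:ℕ) then d' i else 0) :=
                      Finset.add_sum_erase _ (fun i : Fin (m+1) => if k ≤ (i:ℕ) then d' i else 0)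
                        (Finset.mem_univ P)
                    by_cases hgap : ∃ j : Fin (m+1), k < (j:ℕ) ∧ (j:ℕ) < m
                    · obtain ⟨j, hj1, hj2⟩ := hgap
                      have hjP : j ≠ P := by intro h; subst h; omega
                      have hjl : j ≠ lst := by intro h; subst h; omega
                      have e2 : (if k ≤ (j:ℕ) then d' j else 0)
                          ≤ ∑ i ∈ Finset.univ.erase P, (if k ≤ (i:ℕ) then d' i else 0) :=
                        Finset.single_le_sum (f := fun i : Fin (m+1) => if k ≤ (i:ℕ) then d' i else 0)
                          (fun i _ => Nat.zero_le _)
                          (Finset.mem_erase.2 ⟨hjP, Finset.mem_univ _⟩)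
                      have hFj : 1 ≤ (if k ≤ (j:ℕ) then d' j else 0) := by
                        rw [if_pos (by omega), hd'x j hjP hjl]
                        exact hd0 j
                      omega
                    · push_neg at hgap
                      have hkm' : k < m := by omega
                      have hmk : m = k + 1 := by
                        by_contra h
                        have := hgap ⟨k+1, by omega⟩ (by simp)
                        simp at this
                        omega
                      by_cases hd2 : 2 ≤ d lst
                      · have hlP : lst ≠ P := Ne.symm hPlast
                        have e2 : (if k ≤ (lst:ℕ) then d' lst else 0)
                            ≤ ∑ i ∈ Finset.univ.erase P, (if k ≤ (i:ℕ) then d' i else 0) :=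
                          Finset.single_le_sum (f := fun i : Fin (m+1) => if k ≤ (i:ℕ) then d' i else 0)
                            (fun i _ => Nat.zero_le _)
                            (Finset.mem_erase.2 ⟨hlP, Finset.mem_univ _⟩)
                        have hFl : d lst - 1 ≤ (if k ≤ (lst:ℕ) then d' lst else 0) := by
                          rw [if_pos (by omega), hd'last]
                        omega
                      · have hd1 : d lst = 1 := by have := hd0 lst; omega
                        exfalso
                        have hsplit : ∑ i : Fin (m+1), d i
                            = Spre (m+1) d k + ∑ i : Fin (m+1), (if k ≤ (i:ℕ) then d i else 0) := by
                          rw [Spre, ← Finset.sum_add_distrib]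
                          refine Finset.sum_congr rfl fun i _ => ?_
                          by_cases h : (i:ℕ) < k
                          · rw [if_pos h, if_neg (by omega), add_zero]
                          · rw [if_neg h, if_pos (by omega), zero_add]
                        have hsuffix : ∑ i : Fin (m+1), (if k ≤ (i:ℕ) then d i else 0)
                            = d P + d lst := by
                          have hpt : ∀ i : Fin (m+1), (if k ≤ (i:ℕ) then d i else 0)
                              = (if (i:ℕ) = k then d i else 0) + (if (i:ℕ) = k+1 then d i else 0) := by
                            intro i
                            have hisz : (i:ℕ) < k + 2 := by have := i.isLt; omega
                            by_cases h1 : (i:ℕ) = k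
                            · rw [if_pos h1, if_pos (by omega), if_neg (by omega), add_zero]
                            · by_cases h2 : (i:ℕ) = k+1
                              · rw [if_pos h2, if_pos (by omega), if_neg h1, zero_add]
                              · rw [if_neg h1, if_neg h2, if_neg (by omega), add_zero]
                          rw [Finset.sum_congr rfl fun i _ => hpt i, Finset.sum_add_distrib,
                            sum_ite_eq_single (show k < m+1 by omega) d,
                            sum_ite_eq_single (show k+1 < m+1 by omega) d]
                          congr 1
                          · congr 1
                            exact Fin.ext (by simp [hPk])
                          · congr 1
                            exact Fin.ext (by simp [hvallst, hmk])
                        have hfin : ∑ i : Fin (m+1), d i = k*k + k + 1 := by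
                          rw [hsplit, hsuffix, hSdk, hPD, hDk', hd1]
                          ring
                        obtain ⟨t, ht⟩ := hEven
                        obtain ⟨s, hs⟩ := Nat.even_mul_succ_self k
                        have hq2 : k*(k+1) = k*k + k := by ring
                        set q := k * k with hqq
                        set r := k * (k+1) with hrr
                        omega
              · -- C2 : D large, d lst small
                have hDbig : k + 1 ≤ D := by omega
                have hklt : k < m := by omega
                have hkk : k * (k-1) + k = k * k := by
                  rcases k with _ | t
                  · omega
                  · simp only [Nat.succ_sub_one]
                    ring
                set Lc := ∑ i : Fin (m+1), (if k+1 ≤ (i:ℕ) ∧ k+1 ≤ d i then 1 else 0) with hLc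
                set T := ∑ i : Fin (m+1), (if k+1 ≤ (i:ℕ) ∧ d i ≤ k then d i else 0) with hT
                have key1 : Mpre (m+1) d k = k + (k * Lc + T) := by
                  have hpt : ∀ i : Fin (m+1), (if k ≤ (i:ℕ) then min (d i) k else 0)
                      = (if (i:ℕ) = k then k else 0)
                        + ((k * (if k+1 ≤ (i:ℕ) ∧ k+1 ≤ d i then 1 else 0))
                        + (if k+1 ≤ (i:ℕ) ∧ d i ≤ k then d i else 0)) := by
                    intro i
                    by_cases hik : (i:ℕ) = k
                    · have hdi : d i = D := hprefix i (by omega)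
                      split_ifs <;> omega
                    · split_ifs <;> omega
                  rw [Mpre, Finset.sum_congr rfl fun i _ => hpt i, Finset.sum_add_distrib,
                    Finset.sum_add_distrib, ← Finset.mul_sum,
                    sum_ite_eq_single (show k < m+1 by omega) (fun _ => k)]
                have key2 : Mpre (m+1) d (k+1) = (k+1) * Lc + T := by
                  have hpt : ∀ i : Fin (m+1), (if k+1 ≤ (i:ℕ) then min (d i) (k+1) else 0)
                      = ((k+1) * (if k+1 ≤ (i:ℕ) ∧ k+1 ≤ d i then 1 else 0))
                        + (if k+1 ≤ (i:ℕ) ∧ d i ≤ k then d i else 0) := by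
                    intro i
                    split_ifs <;> omega
                  rw [Mpre, Finset.sum_congr rfl fun i _ => hpt i, Finset.sum_add_distrib,
                    ← Finset.mul_sum]
                have key3 : Spre (m+1) d (k+1) = (k+1) * D := by
                  have hpt : ∀ i : Fin (m+1), (if (i:ℕ) < k+1 then d i else 0)
                      = (if (i:ℕ) < k+1 then D else 0) := by
                    intro i
                    by_cases hik : (i:ℕ) < k+1
                    · rw [if_pos hik, if_pos hik]
                      exact hprefix i (by omega)
                    · rw [if_neg hik, if_neg hik]
                  rw [Spre, Finset.sum_congr rfl fun i _ => hpt i]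
                  exact sum_ite_lt_const (by omega) D
                have key4 : Mpre (m+1) d k = Mpre (m+1) d' k + 1 := by
                  have hpt : ∀ i : Fin (m+1), (if k ≤ (i:ℕ) then min (d i) k else 0)
                      = (if k ≤ (i:ℕ) then min (d' i) k else 0) + (if i = lst then 1 else 0) := by
                    intro i
                    by_cases hil : i = lst
                    · subst hil
                      rw [if_pos rfl, if_pos (by omega), if_pos (by omega), hd'last]
                      have := hd0 lst
                      omega
                    · rw [if_neg hil, add_zero]
                      by_cases hiP : i = P
                      · subst hiP
                        rw [hd'P, hPD]
                        split_ifs <;> omega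
                      · rw [hd'x i hiP hil]
                  rw [Mpre, Mpre, Finset.sum_congr rfl fun i _ => hpt i, Finset.sum_add_distrib,
                    Finset.sum_ite_eq' Finset.univ lst (fun _ => 1), if_pos (Finset.mem_univ lst)]
                have hTlst : d lst ≤ T := by
                  have h1 : (if k+1 ≤ (lst:ℕ) ∧ d lst ≤ k then d lst else 0) = d lst := by
                    rw [if_pos ⟨by omega, hdlst⟩]
                  rw [hT]
                  calc d lst = (if k+1 ≤ (lst:ℕ) ∧ d lst ≤ k then d lst else 0) := h1.symm
                    _ ≤ _ := Finset.single_le_sum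
                        (f := fun i : Fin (m+1) => if k+1 ≤ (i:ℕ) ∧ d i ≤ k then d i else 0)
                        (fun i _ => Nat.zero_le _) (Finset.mem_univ lst)
                have EGk := hEG k (by omega)
                have EGk1 := hEG (k+1) (by omega)
                rw [hSdk, key1] at EGk
                rw [key3, key2] at EGk1
                rw [hSk]
                have e1 : (k+1) * D = k * D + D := by ring
                have e2' : (k+1) * ((k+1) - 1) = k * k + k := by
                  simp only [Nat.add_sub_cancel]
                  ring
                have e3 : (k+1) * Lc = k * Lc + Lc := by ring
                have e5 : D ≤ k + Lc → k * D ≤ k * k + k * Lc := by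
                  intro h
                  calc k * D ≤ k * (k + Lc) := Nat.mul_le_mul_left k h
                    _ = k * k + k * Lc := by ring
                set A := k * D with hAd
                set Bv := k * k with hBv
                set Cv := k * Lc with hCv
                set Ev := (k+1) * D with hEv
                set Gv := (k+1) * Lc with hGv
                set Qv := k * (k-1) with hQv
                set Wv := (k+1) * ((k+1) - 1) with hWv
                by_contra hcon
                push_neg at hcon
                have hD2 : D ≤ k + Lc := by omega
                have hmul : A ≤ Bv + Cv := e5 hD2
                have := hd0 lst
                omega
        obtain ⟨G, hG⟩ := ih (m+1) d' (by omega) hA' hEven' hEG'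
        -- degree bound : D ≤ m
        have hDm : D ≤ m := by
          have h1 := hEG 1 (by omega)
          have hS1 : Spre (m+1) d 1 = D := by
            rw [Spre]
            have : ∀ i : Fin (m+1), (if (i : ℕ) < 1 then d i else 0)
                = (if (i : ℕ) = 0 then d i else 0) := by
              intro i
              congr 1
              simp only [eq_iff_iff]
              omega
            rw [Finset.sum_congr rfl fun i _ => this i, sum_ite_eq_single (by omega) d]
            rfl
          have hM1 : Mpre (m+1) d 1 ≤ m := by
            rw [Mpre]
            calc ∑ i : Fin (m+1), (if 1 ≤ (i : ℕ) then min (d i) 1 else 0)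
                ≤ ∑ i : Fin (m+1), (if 1 ≤ (i : ℕ) then 1 else 0) := by
                  refine Finset.sum_le_sum fun i _ => ?_
                  split
                  · exact min_le_right _ _
                  · exact le_refl _
              _ = m := by rw [sum_ite_le_const (by omega)]; omega
          rw [hS1] at h1
          omega
        -- surgery to restore degrees of P and lst
        have hcard : G.degN P + 1 < Fintype.card (Fin (m+1)) := by
          rw [hG P, hd'P, hPD, Fintype.card_fin]
          have := hd0 P
          rw [hPD] at this
          omega
        have hmin : ∀ w, w ≠ P → w ≠ lst → ¬ G.Adj P w → G.degN lst < G.degN w := by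
          intro w h1 h2 _
          rw [hG w, hG lst, hd'x w h1 h2, hd'last]
          have ha : d lst ≤ d w := by
            have hq := hAnti (Fin.le_last w)
            rwa [← hlst] at hq
          have := hd0 lst
          omega
        obtain ⟨G', hG'P, hG'lst, hG'x⟩ := surgery G P lst hPlast hcard hmin
        refine ⟨G', fun i => ?_⟩
        by_cases hiP : i = P
        · subst hiP
          rw [hG'P, hG P, hd'P]
          have := hd0 P
          omega
        by_cases hil : i = lst
        · subst hil
          rw [hG'lst, hG lst, hd'last]
          have := hd0 lst
          omega
        · rw [hG'x i hiP hil, hG i, hd'x i hiP hil]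

theorem erdos_gallai_subset_form (n : ℕ) (d : Fin n → ℕ) :
    (∃ G : SimpleGraph (Fin n), ∀ i, G.degN i = d i) ↔
      (Even (∑ i, d i) ∧ ∀ I : Finset (Fin n),
        ∑ i ∈ I, d i ≤ I.card * (I.card - 1) + ∑ i ∈ Iᶜ, min (d i) I.card) := by
  constructor
  · rintro ⟨G, hG⟩
    constructor
    · have h := even_sum_degN G
      rwa [Finset.sum_congr rfl fun i _ => hG i] at h
    · intro I
      have h := subset_ineq_of_graph G I
      calc ∑ i ∈ I, d i = ∑ i ∈ I, G.degN i := Finset.sum_congr rfl fun i _ => (hG i).symm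
        _ ≤ I.card * (I.card - 1) + ∑ i ∈ Iᶜ, min (G.degN i) I.card := h
        _ = I.card * (I.card - 1) + ∑ i ∈ Iᶜ, min (d i) I.card := by
            congr 1
            exact Finset.sum_congr rfl fun i _ => by rw [hG i]
  · rintro ⟨hEven, hsub⟩
    set σ := Tuple.sort (fun i => OrderDual.toDual (d i)) with hσ
    have hmono := Tuple.monotone_sort (fun i => OrderDual.toDual (d i))
    have hA : Antitone (fun i => d (σ i)) := by
      intro i j hij
      exact OrderDual.toDual_le_toDual.mp (hmono hij)
    have hsum : ∑ i, d (σ i) = ∑ i, d i := Equiv.sum_comp σ d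
    have hEven' : Even (∑ i, d (σ i)) := by rwa [hsum]
    have hEG : ∀ k, k ≤ n → Spre n (fun i => d (σ i)) k
        ≤ k * (k - 1) + Mpre n (fun i => d (σ i)) k := by
      intro k hk
      set I : Finset (Fin n) := (Finset.univ.filter (fun i : Fin n => (i:ℕ) < k)).image σ with hI
      have hcard : I.card = k := by
        rw [hI, Finset.card_image_of_injective _ σ.injective, Finset.card_filter]
        have := sum_ite_lt_const (n := n) hk 1
        omega
      have h := hsub I
      rw [hcard] at h
      have hL : ∑ i ∈ I, d i = Spre n (fun i => d (σ i)) k := by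
        rw [hI, Finset.sum_image (fun a _ b _ hab => σ.injective hab), Spre,
          Finset.sum_filter]
      have hcompl : Iᶜ = (Finset.univ.filter (fun i : Fin n => ¬ (i:ℕ) < k)).image σ := by
        ext b
        simp only [Finset.mem_compl, hI, Finset.mem_image, Finset.mem_filter, Finset.mem_univ,
          true_and]
        constructor
        · intro hb
          refine ⟨σ.symm b, ?_, by simp⟩
          intro hlt
          exact hb ⟨σ.symm b, hlt, by simp⟩
        · rintro ⟨x, hx, rfl⟩ ⟨x', hx', hxx⟩
          exact hx (by rwa [σ.injective hxx] at hx')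
      have hR : ∑ i ∈ Iᶜ, min (d i) k = Mpre n (fun i => d (σ i)) k := by
        rw [hcompl, Finset.sum_image (fun a _ b _ hab => σ.injective hab), Mpre,
          Finset.sum_filter]
        refine Finset.sum_congr rfl fun i _ => ?_
        by_cases hlt : (i:ℕ) < k
        · rw [if_neg (by omega), if_neg (by omega)]
        · rw [if_pos (by omega), if_pos (by omega)]
      rw [hL, hR] at h
      exact h
    obtain ⟨G, hG⟩ := realize_sorted (n + ∑ i, d (σ i)) n (fun i => d (σ i)) le_rfl hA hEven' hEG
    refine ⟨transpGraph G σ, fun i => ?_⟩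
    rw [degN_transp, hG (σ.symm i)]
    simp
end

section
/- For every k ≥ 1, the maximum chromatic number over all simple graphs on 5k vertices in which every vertex has degree 5k−3 equals 3k, and the maximum clique number over all such graphs equals ⌊5k/2⌋. -/
set_option linter.unusedSectionVars false
set_option maxHeartbeats 1000000
open SimpleGraph

open Finset

namespace ChiOmega
variable {V : Type*} [DecidableEq V]

/-- number of H-neighbors of v inside S -/
def degIn (H : SimpleGraph V) [DecidableRel H.Adj] (S : Finset V) (v : V) : ℕ :=
  (S.filter (H.Adj v)).card

lemma double_count (H : SimpleGraph V) [DecidableRel H.Adj] (A B : Finset V) :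
    ∑ a ∈ A, degIn H B a = ∑ b ∈ B, degIn H A b := by
  simp only [degIn, card_filter]
  rw [Finset.sum_comm]
  refine Finset.sum_congr rfl fun b _ => Finset.sum_congr rfl fun a _ => ?_
  by_cases h : H.Adj a b
  · simp [h, h.symm]
  · simp only [h, if_false]
    rw [if_neg (fun h' : H.Adj b a => h h'.symm)]

lemma degIn_split (H : SimpleGraph V) [DecidableRel H.Adj] {R S : Finset V} (hRS : R ⊆ S)
    (v : V) : degIn H S v = degIn H (S \ R) v + degIn H R v := by
  unfold degIn
  rw [← Finset.card_union_of_disjoint (Finset.disjoint_filter_filter Finset.sdiff_disjoint),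
    ← Finset.filter_union, Finset.sdiff_union_of_subset hRS]

lemma degIn_mono (H : SimpleGraph V) [DecidableRel H.Adj] {R S : Finset V} (hRS : R ⊆ S)
    (v : V) : degIn H R v ≤ degIn H S v :=
  Finset.card_le_card (Finset.filter_subset_filter _ hRS)

lemma one_le_degIn {H : SimpleGraph V} [DecidableRel H.Adj] {R : Finset V} {v a : V}
    (ha : a ∈ R) (h : H.Adj v a) : 1 ≤ degIn H R v :=
  Finset.card_pos.mpr ⟨a, Finset.mem_filter.mpr ⟨ha, h⟩⟩

lemma two_le_degIn {H : SimpleGraph V} [DecidableRel H.Adj] {R : Finset V} {v a b : V}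
    (hab : a ≠ b) (ha : a ∈ R) (hb : b ∈ R) (h1 : H.Adj v a) (h2 : H.Adj v b) :
    2 ≤ degIn H R v := by
  have hsub : ({a, b} : Finset V) ⊆ R.filter (H.Adj v) := by
    intro x hx
    rcases Finset.mem_insert.mp hx with rfl | hx
    · exact Finset.mem_filter.mpr ⟨ha, h1⟩
    · rcases Finset.mem_singleton.mp hx with rfl
      exact Finset.mem_filter.mpr ⟨hb, h2⟩
  calc 2 = ({a, b} : Finset V).card := (Finset.card_pair hab).symm
    _ ≤ _ := Finset.card_le_card hsub

/-- the clique-cover coloring result on a finset -/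
def Result (H : SimpleGraph V) [DecidableRel H.Adj] (S : Finset V) : Prop :=
  ∃ c : ℕ, ∃ f : V → ℕ, (∀ v ∈ S, f v < c) ∧
    (∀ u v, u ∈ S → v ∈ S → u ≠ v → f u = f v → H.Adj u v) ∧
    5 * c ≤ ∑ v ∈ S, (5 - degIn H S v)

lemma extend (H : SimpleGraph V) [DecidableRel H.Adj] {S R : Finset V} (hRS : R ⊆ S)
    (hΔ : ∀ v ∈ S, degIn H S v ≤ 2)
    (q : ℕ) (g : V → ℕ) (hg1 : ∀ v ∈ R, g v < q)
    (hg2 : ∀ u v, u ∈ R → v ∈ R → u ≠ v → g u = g v → H.Adj u v)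
    (hcost : 5 * q + ∑ r ∈ R, 2 * degIn H S r ≤ ∑ r ∈ R, (5 + degIn H R r))
    (hres : Result H (S \ R)) : Result H S := by
  obtain ⟨c, f, hf1, hf2, hf3⟩ := hres
  refine ⟨q + c, fun v => if v ∈ R then g v else q + f v, ?_, ?_, ?_⟩
  · intro v hv
    by_cases h : v ∈ R
    · simpa [h] using lt_of_lt_of_le (hg1 v h) (Nat.le_add_right _ _)
    · have := hf1 v (Finset.mem_sdiff.mpr ⟨hv, h⟩)
      simp only [h, if_false]
      omega
  · intro u v hu hv huv heq
    by_cases h1 : u ∈ R <;> by_cases h2 : v ∈ R <;> simp only [h1, h2, if_true, if_false] at heq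
    · exact hg2 u v h1 h2 huv heq
    · exact absurd heq (by have := hg1 u h1; omega)
    · exact absurd heq (by have := hg1 v h2; omega)
    · exact hf2 u v (Finset.mem_sdiff.mpr ⟨hu, h1⟩) (Finset.mem_sdiff.mpr ⟨hv, h2⟩) huv (by omega)
  · -- arithmetic
    have hsplit : ∀ v, degIn H S v = degIn H (S \ R) v + degIn H R v := degIn_split H hRS
    have e1 : ∑ v ∈ S \ R, (5 - degIn H (S \ R) v)
        = ∑ v ∈ S \ R, (5 - degIn H S v) + ∑ v ∈ S \ R, degIn H R v := by
      rw [← Finset.sum_add_distrib]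
      refine Finset.sum_congr rfl fun v hv => ?_
      have h1 := hΔ v (Finset.mem_sdiff.mp hv).1
      have h2 := hsplit v
      omega
    have e2 : ∑ v ∈ S \ R, degIn H R v = ∑ r ∈ R, degIn H (S \ R) r := double_count H _ _
    have e3 : ∑ r ∈ R, degIn H S r = ∑ r ∈ R, degIn H (S \ R) r + ∑ r ∈ R, degIn H R r := by
      rw [← Finset.sum_add_distrib]
      exact Finset.sum_congr rfl fun r _ => hsplit r
    have e4 : ∑ v ∈ S, (5 - degIn H S v)
        = ∑ v ∈ S \ R, (5 - degIn H S v) + ∑ r ∈ R, (5 - degIn H S r) :=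
      (Finset.sum_sdiff hRS).symm
    have e5 : ∑ r ∈ R, (5 - degIn H S r) + ∑ r ∈ R, degIn H S r = 5 * R.card := by
      rw [← Finset.sum_add_distrib]
      rw [Finset.sum_congr rfl (fun r hr => by have := hΔ r (hRS hr); omega :
        ∀ r ∈ R, (5 - degIn H S r) + degIn H S r = 5)]
      simp [mul_comm]
    have e6 : ∑ r ∈ R, (5 + degIn H R r) = 5 * R.card + ∑ r ∈ R, degIn H R r := by
      rw [Finset.sum_add_distrib]
      simp [mul_comm]
    have e7 : ∑ r ∈ R, 2 * degIn H S r = 2 * ∑ r ∈ R, degIn H S r := by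
      rw [Finset.mul_sum]
    rw [e4]
    rw [e1, e2] at hf3
    rw [e6, e7] at hcost
    omega




/-- properness of the 2-class coloring -/
lemma gprop2 {H : SimpleGraph V} (a b c d : V) (hab : H.Adj a b) (hcd : H.Adj c d)
    (hca : c ≠ a) (hcb : c ≠ b) (hda : d ≠ a) (hdb : d ≠ b) :
    ∀ u w, u ∈ ({a, b, c, d} : Finset V) → w ∈ ({a, b, c, d} : Finset V) → u ≠ w →
      (if u = a ∨ u = b then 0 else 1) = (if w = a ∨ w = b then (0 : ℕ) else 1) →
      H.Adj u w := by
  intro u w hu hw hne heq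
  simp only [mem_insert, mem_singleton] at hu hw
  by_cases h1 : u = a ∨ u = b <;> by_cases h2 : w = a ∨ w = b <;>
    simp only [h1, h2, if_true, if_false] at heq
  all_goals try exact absurd heq (by omega)
  · rcases h1 with rfl | rfl <;> rcases h2 with rfl | rfl
    · exact absurd rfl hne
    · exact hab
    · exact hab.symm
    · exact absurd rfl hne
  · have hu' : u = c ∨ u = d := by tauto
    have hw' : w = c ∨ w = d := by tauto
    rcases hu' with rfl | rfl <;> rcases hw' with rfl | rfl
    · exact absurd rfl hne
    · exact hcd
    · exact hcd.symm
    · exact absurd rfl hne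

/-- properness of the 3-class coloring; the third class may be a singleton (e = f) -/
lemma gprop3 {H : SimpleGraph V} (a b c d e f : V) (hab : H.Adj a b) (hcd : H.Adj c d)
    (hef : H.Adj e f ∨ e = f)
    (hca : c ≠ a) (hcb : c ≠ b) (hda : d ≠ a) (hdb : d ≠ b)
    (hea : e ≠ a) (heb : e ≠ b) (hec : e ≠ c) (hed : e ≠ d)
    (hfa : f ≠ a) (hfb : f ≠ b) (hfc : f ≠ c) (hfd : f ≠ d) :
    ∀ u w, u ∈ ({a, b, c, d, e, f} : Finset V) → w ∈ ({a, b, c, d, e, f} : Finset V) →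
      u ≠ w →
      (if u = a ∨ u = b then 0 else if u = c ∨ u = d then 1 else 2)
        = (if w = a ∨ w = b then 0 else if w = c ∨ w = d then (1 : ℕ) else 2) →
      H.Adj u w := by
  intro u w hu hw hne heq
  simp only [mem_insert, mem_singleton] at hu hw
  by_cases h1 : u = a ∨ u = b <;> by_cases h2 : w = a ∨ w = b <;>
    by_cases h3 : u = c ∨ u = d <;> by_cases h4 : w = c ∨ w = d <;>
    simp only [h1, h2, h3, h4, if_true, if_false] at heq
  all_goals try exact absurd heq (by omega)
  all_goals try (rcases h1 with rfl | rfl <;> rcases h2 with rfl | rfl <;>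
      first | exact absurd rfl hne | exact hab | exact hab.symm)
  all_goals try (rcases h3 with rfl | rfl <;> rcases h4 with rfl | rfl <;>
      first | exact absurd rfl hne | exact hcd | exact hcd.symm)
  · have hu' : u = e ∨ u = f := by tauto
    have hw' : w = e ∨ w = f := by tauto
    rcases hef with hef | rfl
    · rcases hu' with rfl | rfl <;> rcases hw' with rfl | rfl
      · exact absurd rfl hne
      · exact hef
      · exact hef.symm
      · exact absurd rfl hne
    · rcases hu' with rfl | rfl <;> rcases hw' with rfl | rfl <;> exact absurd rfl hne






lemma nbrs_of_deg2 {H : SimpleGraph V} [DecidableRel H.Adj] {S : Finset V} {v u : V}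
    (hd : degIn H S v = 2) (hu : u ∈ S) (hadj : H.Adj v u) :
    ∃ w, w ∈ S ∧ H.Adj v w ∧ w ≠ u ∧ ∀ x ∈ S, H.Adj v x → x = u ∨ x = w := by
  obtain ⟨a, b, hab, hfil⟩ := Finset.card_eq_two.mp hd
  have hmem : ∀ x, (x ∈ S ∧ H.Adj v x) ↔ (x = a ∨ x = b) := by
    intro x
    rw [← Finset.mem_filter, hfil]
    simp
  have hu' : u = a ∨ u = b := (hmem u).mp ⟨hu, hadj⟩
  rcases hu' with rfl | rfl
  · have hb := (hmem b).mpr (Or.inr rfl)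
    exact ⟨b, hb.1, hb.2, Ne.symm hab, fun x hx hax => (hmem x).mp ⟨hx, hax⟩⟩
  · have ha := (hmem a).mpr (Or.inl rfl)
    exact ⟨a, ha.1, ha.2, hab, fun x hx hax => ((hmem x).mp ⟨hx, hax⟩).symm⟩

lemma exists_nbr {H : SimpleGraph V} [DecidableRel H.Adj] {S : Finset V} {v : V}
    (hd : 0 < degIn H S v) : ∃ u ∈ S, H.Adj v u := by
  obtain ⟨u, hu⟩ := Finset.card_pos.mp hd
  exact ⟨u, (Finset.mem_filter.mp hu).1, (Finset.mem_filter.mp hu).2⟩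




lemma master (H : SimpleGraph V) [DecidableRel H.Adj] :
    ∀ S : Finset V, (∀ v ∈ S, degIn H S v ≤ 2) → Result H S := by
  intro S
  induction S using Finset.strongInduction with
  | _ S IH =>
    intro hΔ
    rcases S.eq_empty_or_nonempty with rfl | hS
    · exact ⟨0, fun _ => 0, by simp, by simp, by simp⟩
    have step : ∀ R : Finset V, R ⊆ S → R.Nonempty → ∀ q : ℕ, ∀ g : V → ℕ,
        (∀ v ∈ R, g v < q) →
        (∀ u v, u ∈ R → v ∈ R → u ≠ v → g u = g v → H.Adj u v) →
        5 * q + ∑ r ∈ R, 2 * degIn H S r ≤ ∑ r ∈ R, (5 + degIn H R r) → Result H S := by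
      intro R hRS hRne q g h1 h2 h3
      refine extend H hRS hΔ q g h1 h2 h3 (IH _ (Finset.sdiff_ssubset hRS hRne) ?_)
      intro v hv
      exact le_trans (degIn_mono H Finset.sdiff_subset v) (hΔ v (Finset.mem_sdiff.mp hv).1)
    by_cases h0 : ∃ v ∈ S, degIn H S v = 0
    · obtain ⟨v, hv, hd⟩ := h0
      refine step {v} (by simpa) ⟨v, Finset.mem_singleton_self v⟩ 1 (fun _ => 0)
        (by simp) ?_ ?_
      · intro u w hu hw hne _
        rw [Finset.mem_singleton] at hu hw
        exact absurd (hu.trans hw.symm) hne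
      · rw [Finset.sum_singleton, Finset.sum_singleton, hd]
        omega
    by_cases h1 : ∃ v ∈ S, degIn H S v = 1
    · obtain ⟨v, hv, hd⟩ := h1
      obtain ⟨u, huS, hadj⟩ := exists_nbr (H := H) (S := S) (v := v) (by omega)
      have hvu : v ≠ u := hadj.ne
      refine step {v, u} ?_ ⟨v, Finset.mem_insert_self _ _⟩ 1 (fun _ => 0) (by simp) ?_ ?_
      · intro x hx
        rcases Finset.mem_insert.mp hx with rfl | hx
        · exact hv
        · rw [Finset.mem_singleton] at hx; subst hx; exact huS
      · intro x y hx hy hne _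
        simp only [Finset.mem_insert, Finset.mem_singleton] at hx hy
        rcases hx with rfl | rfl <;> rcases hy with rfl | rfl
        · exact absurd rfl hne
        · exact hadj
        · exact hadj.symm
        · exact absurd rfl hne
      · rw [Finset.sum_pair hvu, Finset.sum_pair hvu, hd]
        have b1 : 1 ≤ degIn H {v, u} v :=
          one_le_degIn (Finset.mem_insert.mpr (Or.inr (Finset.mem_singleton_self u))) hadj
        have b2 : 1 ≤ degIn H {v, u} u := one_le_degIn (Finset.mem_insert_self v _) hadj.symm
        have b3 := hΔ u huS
        omega
    -- all degrees equal 2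
    have hd2 : ∀ v ∈ S, degIn H S v = 2 := by
      intro v hv
      have := hΔ v hv
      push_neg at h0 h1
      have := h0 v hv
      have := h1 v hv
      omega
    obtain ⟨v1, hv1⟩ := hS
    obtain ⟨v2, hv2S, hadj12⟩ := exists_nbr (H := H) (S := S) (v := v1) (by rw [hd2 v1 hv1]; omega)
    obtain ⟨v0, hv0S, hadj10, h02, huniq1⟩ := nbrs_of_deg2 (hd2 v1 hv1) hv2S hadj12
    have h01 : v0 ≠ v1 := hadj10.ne'
    have h12 : v1 ≠ v2 := hadj12.ne
    by_cases htri : H.Adj v0 v2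
    · -- triangle
      refine step {v0, v1, v2} ?_ ⟨v0, Finset.mem_insert_self _ _⟩ 1 (fun _ => 0)
        (by simp) ?_ ?_
      · intro x hx
        simp only [Finset.mem_insert, Finset.mem_singleton] at hx
        rcases hx with rfl | rfl | rfl <;> assumption
      · intro x y hx hy hne _
        simp only [Finset.mem_insert, Finset.mem_singleton] at hx hy
        rcases hx with rfl | rfl | rfl <;> rcases hy with rfl | rfl | rfl <;>
          first
            | exact absurd rfl hne
            | exact hadj10.symm | exact hadj10 | exact hadj12 | exact hadj12.symm
            | exact htri | exact htri.symm
      · have hn1 : v0 ∉ ({v1, v2} : Finset V) := by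
          simp only [Finset.mem_insert, Finset.mem_singleton]
          push_neg
          exact ⟨h01, h02⟩
        have hn2 : v1 ∉ ({v2} : Finset V) := by
          simp only [Finset.mem_singleton]; exact h12
        rw [Finset.sum_insert hn1, Finset.sum_insert hn2, Finset.sum_singleton,
          Finset.sum_insert hn1, Finset.sum_insert hn2, Finset.sum_singleton,
          hd2 v0 hv0S, hd2 v1 hv1, hd2 v2 hv2S]
        have m0 : v0 ∈ ({v0, v1, v2} : Finset V) := Finset.mem_insert_self _ _
        have m1 : v1 ∈ ({v0, v1, v2} : Finset V) := by simp
        have m2 : v2 ∈ ({v0, v1, v2} : Finset V) := by simp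
        have b0 : 2 ≤ degIn H {v0, v1, v2} v0 := two_le_degIn h12 m1 m2 hadj10.symm htri
        have b1 : 2 ≤ degIn H {v0, v1, v2} v1 := two_le_degIn h02 m0 m2 hadj10 hadj12
        have b2 : 2 ≤ degIn H {v0, v1, v2} v2 :=
          two_le_degIn h01 m0 m1 htri.symm hadj12.symm
        omega
    · obtain ⟨v3, hv3S, hadj23, h31, huniq2⟩ :=
        nbrs_of_deg2 (hd2 v2 hv2S) hv1 hadj12.symm
      have h23 : v2 ≠ v3 := hadj23.ne
      have h30 : v3 ≠ v0 := fun h => htri (h ▸ hadj23).symm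
      have h13 : v1 ≠ v3 := h31.symm
      have h03 : v0 ≠ v3 := h30.symm
      obtain ⟨v4, hv4S, hadj34, h42, huniq3⟩ :=
        nbrs_of_deg2 (hd2 v3 hv3S) hv2S hadj23.symm
      have h34 : v3 ≠ v4 := hadj34.ne
      have h41 : v4 ≠ v1 := by
        intro h
        subst h
        rcases huniq1 v3 hv3S hadj34.symm with h | h
        · exact h23 h.symm
        · exact h30 h
      have h24 : v2 ≠ v4 := h42.symm
      have h14 : v1 ≠ v4 := h41.symm
      by_cases h40 : v4 = v0
      · have hadj30 : H.Adj v3 v0 := h40 ▸ hadj34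
        refine step {v0, v1, v2, v3} ?_ ⟨v0, Finset.mem_insert_self _ _⟩ 2
          (fun x => if x = v0 ∨ x = v1 then 0 else 1) ?_
          (gprop2 v0 v1 v2 v3 hadj10.symm hadj23 h02.symm h12.symm h03.symm h31) ?_
        · intro x hx
          simp only [Finset.mem_insert, Finset.mem_singleton] at hx
          rcases hx with rfl | rfl | rfl | rfl <;> assumption
        · intro x hx
          split <;> omega
        · have hn0 : v0 ∉ ({v1, v2, v3} : Finset V) := by
            simp only [Finset.mem_insert, Finset.mem_singleton]; push_neg
            exact ⟨h01, h02, h03⟩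
          have hn1 : v1 ∉ ({v2, v3} : Finset V) := by
            simp only [Finset.mem_insert, Finset.mem_singleton]; push_neg
            exact ⟨h12, h13⟩
          have hn2 : v2 ∉ ({v3} : Finset V) := by
            simp only [Finset.mem_singleton]; exact h23
          rw [Finset.sum_insert hn0, Finset.sum_insert hn1, Finset.sum_insert hn2,
            Finset.sum_singleton, Finset.sum_insert hn0, Finset.sum_insert hn1,
            Finset.sum_insert hn2, Finset.sum_singleton,
            hd2 v0 hv0S, hd2 v1 hv1, hd2 v2 hv2S, hd2 v3 hv3S]
          have m0 : v0 ∈ ({v0, v1, v2, v3} : Finset V) := by simp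
          have m1 : v1 ∈ ({v0, v1, v2, v3} : Finset V) := by simp
          have m2 : v2 ∈ ({v0, v1, v2, v3} : Finset V) := by simp
          have m3 : v3 ∈ ({v0, v1, v2, v3} : Finset V) := by simp
          have b0 : 2 ≤ degIn H {v0, v1, v2, v3} v0 :=
            two_le_degIn h13 m1 m3 hadj10.symm hadj30.symm
          have b1 : 2 ≤ degIn H {v0, v1, v2, v3} v1 := two_le_degIn h02 m0 m2 hadj10 hadj12
          have b2 : 2 ≤ degIn H {v0, v1, v2, v3} v2 :=
            two_le_degIn h13 m1 m3 hadj12.symm hadj23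
          have b3 : 2 ≤ degIn H {v0, v1, v2, v3} v3 :=
            two_le_degIn h02.symm m2 m0 hadj23.symm hadj30
          omega
      · have h04 : v0 ≠ v4 := fun h => h40 h.symm
        obtain ⟨v5, hv5S, hadj45, h53, huniq4⟩ :=
          nbrs_of_deg2 (hd2 v4 hv4S) hv3S hadj34.symm
        have h45 : v4 ≠ v5 := hadj45.ne
        have h52 : v5 ≠ v2 := by
          intro h
          rcases huniq2 v4 hv4S (h ▸ hadj45).symm with h' | h'
          · exact h41 h'
          · exact h34 h'.symm
        have h51 : v5 ≠ v1 := by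
          intro h
          rcases huniq1 v4 hv4S (h ▸ hadj45).symm with h' | h'
          · exact h42 h'
          · exact h40 h'
        have h25 : v2 ≠ v5 := h52.symm
        have h15 : v1 ≠ v5 := h51.symm
        have h35 : v3 ≠ v5 := h53.symm
        by_cases h50 : v5 = v0
        · have hadj40 : H.Adj v4 v0 := h50 ▸ hadj45
          have hset : ({v0, v1, v2, v3, v4, v4} : Finset V) = {v0, v1, v2, v3, v4} := by
            ext x
            simp only [Finset.mem_insert, Finset.mem_singleton]
            tauto
          refine step {v0, v1, v2, v3, v4} ?_ ⟨v0, Finset.mem_insert_self _ _⟩ 3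
            (fun x => if x = v0 ∨ x = v1 then 0 else if x = v2 ∨ x = v3 then 1 else 2)
            ?_ ?_ ?_
          · intro x hx
            simp only [Finset.mem_insert, Finset.mem_singleton] at hx
            rcases hx with rfl | rfl | rfl | rfl | rfl <;> assumption
          · intro x hx
            split
            · omega
            · split <;> omega
          · intro u w hu hw hne heq
            exact gprop3 v0 v1 v2 v3 v4 v4 hadj10.symm hadj23 (Or.inr rfl)
              h02.symm h12.symm h30 h31 h40 h41 h42 h34.symm h40 h41 h42 h34.symm
              u w (by rw [hset]; exact hu) (by rw [hset]; exact hw) hne heq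
          · have hn0 : v0 ∉ ({v1, v2, v3, v4} : Finset V) := by
              simp only [Finset.mem_insert, Finset.mem_singleton]; push_neg
              exact ⟨h01, h02, h03, h04⟩
            have hn1 : v1 ∉ ({v2, v3, v4} : Finset V) := by
              simp only [Finset.mem_insert, Finset.mem_singleton]; push_neg
              exact ⟨h12, h13, h14⟩
            have hn2 : v2 ∉ ({v3, v4} : Finset V) := by
              simp only [Finset.mem_insert, Finset.mem_singleton]; push_neg
              exact ⟨h23, h24⟩
            have hn3 : v3 ∉ ({v4} : Finset V) := by
              simp only [Finset.mem_singleton]; exact h34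
            rw [Finset.sum_insert hn0, Finset.sum_insert hn1, Finset.sum_insert hn2,
              Finset.sum_insert hn3, Finset.sum_singleton,
              Finset.sum_insert hn0, Finset.sum_insert hn1, Finset.sum_insert hn2,
              Finset.sum_insert hn3, Finset.sum_singleton,
              hd2 v0 hv0S, hd2 v1 hv1, hd2 v2 hv2S, hd2 v3 hv3S, hd2 v4 hv4S]
            have m0 : v0 ∈ ({v0, v1, v2, v3, v4} : Finset V) := by simp
            have m1 : v1 ∈ ({v0, v1, v2, v3, v4} : Finset V) := by simp
            have m2 : v2 ∈ ({v0, v1, v2, v3, v4} : Finset V) := by simp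
            have m3 : v3 ∈ ({v0, v1, v2, v3, v4} : Finset V) := by simp
            have m4 : v4 ∈ ({v0, v1, v2, v3, v4} : Finset V) := by simp
            have b0 : 2 ≤ degIn H {v0, v1, v2, v3, v4} v0 :=
              two_le_degIn h14 m1 m4 hadj10.symm hadj40.symm
            have b1 : 2 ≤ degIn H {v0, v1, v2, v3, v4} v1 :=
              two_le_degIn h02 m0 m2 hadj10 hadj12
            have b2 : 2 ≤ degIn H {v0, v1, v2, v3, v4} v2 :=
              two_le_degIn h13 m1 m3 hadj12.symm hadj23
            have b3 : 2 ≤ degIn H {v0, v1, v2, v3, v4} v3 :=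
              two_le_degIn h24 m2 m4 hadj23.symm hadj34
            have b4 : 2 ≤ degIn H {v0, v1, v2, v3, v4} v4 :=
              two_le_degIn h30 m3 m0 hadj34.symm hadj40
            omega
        · have h05 : v0 ≠ v5 := fun h => h50 h.symm
          refine step {v0, v1, v2, v3, v4, v5} ?_ ⟨v0, Finset.mem_insert_self _ _⟩ 3
            (fun x => if x = v0 ∨ x = v1 then 0 else if x = v2 ∨ x = v3 then 1 else 2)
            ?_
            (gprop3 v0 v1 v2 v3 v4 v5 hadj10.symm hadj23 (Or.inl hadj45)
              h02.symm h12.symm h30 h31 h40 h41 h42 h34.symm h50 h51 h52 h53) ?_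
          · intro x hx
            simp only [Finset.mem_insert, Finset.mem_singleton] at hx
            rcases hx with rfl | rfl | rfl | rfl | rfl | rfl <;> assumption
          · intro x hx
            split
            · omega
            · split <;> omega
          · have hn0 : v0 ∉ ({v1, v2, v3, v4, v5} : Finset V) := by
              simp only [Finset.mem_insert, Finset.mem_singleton]; push_neg
              exact ⟨h01, h02, h03, h04, h05⟩
            have hn1 : v1 ∉ ({v2, v3, v4, v5} : Finset V) := by
              simp only [Finset.mem_insert, Finset.mem_singleton]; push_neg
              exact ⟨h12, h13, h14, h15⟩
            have hn2 : v2 ∉ ({v3, v4, v5} : Finset V) := by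
              simp only [Finset.mem_insert, Finset.mem_singleton]; push_neg
              exact ⟨h23, h24, h25⟩
            have hn3 : v3 ∉ ({v4, v5} : Finset V) := by
              simp only [Finset.mem_insert, Finset.mem_singleton]; push_neg
              exact ⟨h34, h35⟩
            have hn4 : v4 ∉ ({v5} : Finset V) := by
              simp only [Finset.mem_singleton]; exact h45
            rw [Finset.sum_insert hn0, Finset.sum_insert hn1, Finset.sum_insert hn2,
              Finset.sum_insert hn3, Finset.sum_insert hn4, Finset.sum_singleton,
              Finset.sum_insert hn0, Finset.sum_insert hn1, Finset.sum_insert hn2,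
              Finset.sum_insert hn3, Finset.sum_insert hn4, Finset.sum_singleton,
              hd2 v0 hv0S, hd2 v1 hv1, hd2 v2 hv2S, hd2 v3 hv3S, hd2 v4 hv4S, hd2 v5 hv5S]
            have m0 : v0 ∈ ({v0, v1, v2, v3, v4, v5} : Finset V) := by simp
            have m1 : v1 ∈ ({v0, v1, v2, v3, v4, v5} : Finset V) := by simp
            have m2 : v2 ∈ ({v0, v1, v2, v3, v4, v5} : Finset V) := by simp
            have m3 : v3 ∈ ({v0, v1, v2, v3, v4, v5} : Finset V) := by simp
            have m4 : v4 ∈ ({v0, v1, v2, v3, v4, v5} : Finset V) := by simp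
            have m5 : v5 ∈ ({v0, v1, v2, v3, v4, v5} : Finset V) := by simp
            have b0 : 1 ≤ degIn H {v0, v1, v2, v3, v4, v5} v0 := one_le_degIn m1 hadj10.symm
            have b1 : 2 ≤ degIn H {v0, v1, v2, v3, v4, v5} v1 :=
              two_le_degIn h02 m0 m2 hadj10 hadj12
            have b2 : 2 ≤ degIn H {v0, v1, v2, v3, v4, v5} v2 :=
              two_le_degIn h13 m1 m3 hadj12.symm hadj23
            have b3 : 2 ≤ degIn H {v0, v1, v2, v3, v4, v5} v3 :=
              two_le_degIn h24 m2 m4 hadj23.symm hadj34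
            have b4 : 2 ≤ degIn H {v0, v1, v2, v3, v4, v5} v4 :=
              two_le_degIn h35 m3 m5 hadj34.symm hadj45
            have b5 : 1 ≤ degIn H {v0, v1, v2, v3, v4, v5} v5 := one_le_degIn m4 hadj45.symm
            omega

section Graphs
variable {W : Type*} [Fintype W] [DecidableEq W]

lemma degN_eq_degree (G : SimpleGraph W) [DecidableRel G.Adj] (v : W) :
    G.degN v = G.degree v := by
  have h : {w | G.Adj v w} = ↑(G.neighborFinset v) := by
    ext w
    simp
  rw [SimpleGraph.degN, h, Set.ncard_coe_finset]
  rfl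

lemma degIn_univ_eq_degN (H : SimpleGraph W) [DecidableRel H.Adj] (v : W) :
    degIn H Finset.univ v = H.degN v := by
  rw [degN_eq_degree]
  unfold degIn SimpleGraph.degree
  congr 1
  ext w
  simp

lemma degN_compl (G : SimpleGraph W) (v : W) :
    Gᶜ.degN v = Fintype.card W - 1 - G.degN v := by
  classical
  rw [degN_eq_degree, degN_eq_degree, SimpleGraph.degree_compl]

lemma colorable_of_compl (G : SimpleGraph W) [DecidableRel G.Adj]
    (h2 : ∀ v, Gᶜ.degN v = 2) (c' : ℕ) (hc' : Fintype.card W * 3 ≤ 5 * c') :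
    G.Colorable c' := by
  classical
  have hΔ : ∀ v ∈ (Finset.univ : Finset W), degIn Gᶜ Finset.univ v ≤ 2 := by
    intro v _
    rw [degIn_univ_eq_degN, h2 v]
  obtain ⟨c, f, hf1, hf2, hf3⟩ := master Gᶜ Finset.univ hΔ
  have hsum : ∑ v ∈ (Finset.univ : Finset W), (5 - degIn Gᶜ Finset.univ v)
      = 3 * Fintype.card W := by
    rw [Finset.sum_congr rfl (fun v _ => by rw [degIn_univ_eq_degN, h2 v] :
      ∀ v ∈ (Finset.univ : Finset W), (5 - degIn Gᶜ Finset.univ v) = 3)]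
    simp [mul_comm]
  have hcc : c ≤ c' := by omega
  refine SimpleGraph.Colorable.mono hcc ⟨SimpleGraph.Coloring.mk
    (fun v => ⟨f v, hf1 v (Finset.mem_univ v)⟩) ?_⟩
  intro a b hadj heq
  simp only [Fin.mk.injEq] at heq
  have := hf2 a b (Finset.mem_univ a) (Finset.mem_univ b) hadj.ne heq
  exact (G.compl_adj a b).mp this |>.2 hadj

lemma clique_card_le (G : SimpleGraph W) [DecidableRel G.Adj]
    (h2 : ∀ v, Gᶜ.degN v = 2) (s : Finset W) (hs : G.IsClique s) :
    2 * s.card ≤ Fintype.card W := by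
  classical
  have hzero : ∀ v ∈ s, degIn Gᶜ s v = 0 := by
    intro v hv
    rw [degIn, Finset.card_eq_zero, Finset.filter_eq_empty_iff]
    intro w hw hadj
    obtain ⟨hne, hnadj⟩ := (G.compl_adj v w).mp hadj
    exact hnadj (hs hv hw hne)
  have key : ∀ v ∈ s, degIn Gᶜ (Finset.univ \ s) v = 2 := by
    intro v hv
    have h := degIn_split Gᶜ (s.subset_univ) v
    rw [degIn_univ_eq_degN, h2 v, hzero v hv] at h
    omega
  have count1 : ∑ v ∈ s, degIn Gᶜ (Finset.univ \ s) v = 2 * s.card := by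
    rw [Finset.sum_congr rfl key]
    simp [mul_comm]
  have count2 : ∑ v ∈ s, degIn Gᶜ (Finset.univ \ s) v
      = ∑ w ∈ Finset.univ \ s, degIn Gᶜ s w := double_count Gᶜ _ _
  have count3 : ∑ w ∈ Finset.univ \ s, degIn Gᶜ s w ≤ (Finset.univ \ s).card * 2 := by
    refine Finset.sum_le_card_nsmul _ _ 2 fun w _ => ?_
    calc degIn Gᶜ s w ≤ degIn Gᶜ Finset.univ w := degIn_mono Gᶜ (s.subset_univ) w
      _ = 2 := by rw [degIn_univ_eq_degN, h2 w]
  have hcard : (Finset.univ \ s).card = Fintype.card W - s.card := by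
    rw [Finset.card_sdiff_of_subset (s.subset_univ), Finset.card_univ]
  have hle : s.card ≤ Fintype.card W := by
    rw [← Finset.card_univ]
    exact Finset.card_le_univ s
  omega

end Graphs

lemma group_card {N k g : ℕ} (hN : N = 5 * k) (hg : g < k) :
    ((Finset.univ : Finset (Fin N)).filter (fun v : Fin N => (v : ℕ) / 5 = g)).card = 5 := by
  have himg : ((Finset.univ : Finset (Fin N)).filter (fun v : Fin N => (v : ℕ) / 5 = g))
      = (Finset.range 5).image (fun i => (⟨5 * g + i % 5, by omega⟩ : Fin N)) := by
    ext v
    simp only [Finset.mem_filter, Finset.mem_univ, true_and, Finset.mem_image,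
      Finset.mem_range]
    constructor
    · intro h
      refine ⟨(v : ℕ) - 5 * g, by omega, ?_⟩
      have hv := v.isLt
      apply Fin.ext
      show 5 * g + ((v : ℕ) - 5 * g) % 5 = (v : ℕ)
      omega
    · rintro ⟨i, hi, rfl⟩
      show (5 * g + i % 5) / 5 = g
      omega
  rw [himg, Finset.card_image_of_injOn, Finset.card_range]
  intro a ha b hb hab
  simp only [Finset.coe_range, Set.mem_Iio] at ha hb
  simp only [Fin.mk.injEq] at hab
  omega

lemma coloring_lb {N k : ℕ} (hN : N = 5 * k) (G : SimpleGraph (Fin N))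
    (hgrp : ∀ a b : Fin N, a ≠ b → ¬G.Adj a b → (a : ℕ) / 5 = (b : ℕ) / 5)
    (htri : ∀ a b c : Fin N, a ≠ b → a ≠ c → b ≠ c →
      ¬G.Adj a b → ¬G.Adj a c → ¬G.Adj b c → False)
    {m : ℕ} (C : G.Coloring (Fin m)) : 3 * k ≤ m := by
  classical
  set F : Fin m → Finset (Fin N) :=
    fun j => Finset.univ.filter (fun v => C v = j) with hF
  have hnadj : ∀ j, ∀ a ∈ F j, ∀ b ∈ F j, a ≠ b → ¬G.Adj a b := by
    intro j a ha b hb hne hadj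
    rw [hF, Finset.mem_filter] at ha hb
    exact C.valid hadj (ha.2.trans hb.2.symm)
  have hcard2 : ∀ j, (F j).card ≤ 2 := by
    intro j
    by_contra h
    obtain ⟨a, ha, b, hb, c, hc, hab, hac, hbc⟩ := Finset.two_lt_card.mp (show 2 < (F j).card by omega)
    exact htri a b c hab hac hbc (hnadj j a ha b hb hab) (hnadj j a ha c hc hac)
      (hnadj j b hb c hc hbc)
  set T : Finset (Fin m) := Finset.univ.filter (fun j => (F j).card = 2) with hT
  set φ : Fin m → ℕ := fun j => (F j).sup (fun v => (v : ℕ) / 5) with hφ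
  have hgroup : ∀ j ∈ T, ∃ a b : Fin N, a ≠ b ∧ F j = {a, b} ∧
      (a : ℕ) / 5 = φ j ∧ (b : ℕ) / 5 = φ j := by
    intro j hj
    rw [hT, Finset.mem_filter] at hj
    obtain ⟨a, b, hab, hFj⟩ := Finset.card_eq_two.mp hj.2
    have hamem : a ∈ F j := by rw [hFj]; simp
    have hbmem : b ∈ F j := by rw [hFj]; simp
    have hsame : (a : ℕ) / 5 = (b : ℕ) / 5 :=
      hgrp a b hab (hnadj j a hamem b hbmem hab)
    have hsup : φ j = (a : ℕ) / 5 := by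
      rw [hφ]
      show (F j).sup (fun v => (v : ℕ) / 5) = (a : ℕ) / 5
      rw [hFj, Finset.sup_insert, Finset.sup_singleton, hsame, sup_idem]
    exact ⟨a, b, hab, hFj, hsup.symm, (hsup.trans hsame).symm⟩
  have hφmem : ∀ j ∈ T, φ j ∈ Finset.range k := by
    intro j hj
    obtain ⟨a, b, hab, hFj, ha5, hb5⟩ := hgroup j hj
    have := a.isLt
    rw [Finset.mem_range]
    omega
  have hTcard : T.card ≤ 2 * k := by
    rw [Finset.card_eq_sum_card_fiberwise hφmem]
    have hfib : ∀ g ∈ Finset.range k, (T.filter (fun j => φ j = g)).card ≤ 2 := by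
      intro g hg
      set Tg := T.filter (fun j => φ j = g) with hTg
      have hdisj : ∀ j₁ ∈ Tg, ∀ j₂ ∈ Tg, j₁ ≠ j₂ → Disjoint (F j₁) (F j₂) := by
        intro j₁ _ j₂ _ hne
        rw [Finset.disjoint_left]
        intro x hx₁ hx₂
        rw [hF, Finset.mem_filter] at hx₁ hx₂
        exact hne (hx₁.2.symm.trans hx₂.2)
      have hsub : Tg.biUnion F ⊆ Finset.univ.filter (fun v : Fin N => (v : ℕ) / 5 = g) := by
        intro v hv
        obtain ⟨j, hj, hvj⟩ := Finset.mem_biUnion.mp hv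
        rw [hTg, Finset.mem_filter] at hj
        obtain ⟨a, b, hab, hFj, ha5, hb5⟩ := hgroup j hj.1
        rw [Finset.mem_filter]
        refine ⟨Finset.mem_univ v, ?_⟩
        rw [hFj] at hvj
        rcases Finset.mem_insert.mp hvj with rfl | hvb
        · omega
        · rw [Finset.mem_singleton] at hvb
          subst hvb
          omega
      have hsum : ∑ j ∈ Tg, (F j).card ≤ 5 := by
        rw [← Finset.card_biUnion hdisj]
        calc (Tg.biUnion F).card
            ≤ (Finset.univ.filter (fun v : Fin N => (v : ℕ) / 5 = g)).card :=
              Finset.card_le_card hsub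
          _ = 5 := group_card hN (Finset.mem_range.mp hg)
      have heach : ∀ j ∈ Tg, (F j).card = 2 := by
        intro j hj
        rw [hTg, Finset.mem_filter, hT, Finset.mem_filter] at hj
        exact hj.1.2
      rw [Finset.sum_congr rfl heach] at hsum
      rw [Finset.sum_const, smul_eq_mul] at hsum
      omega
    calc ∑ g ∈ Finset.range k, (T.filter (fun j => φ j = g)).card
        ≤ ∑ _g ∈ Finset.range k, 2 := Finset.sum_le_sum hfib
      _ = 2 * k := by simp [mul_comm]
  have htotal : ∑ j ∈ (Finset.univ : Finset (Fin m)), (F j).card = N := by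
    rw [← Finset.card_eq_sum_card_fiberwise (fun v _ => Finset.mem_univ (C v))]
    simp
  have hsplitsum : ∑ j ∈ (Finset.univ : Finset (Fin m)), (F j).card
      = ∑ j ∈ Finset.univ \ T, (F j).card + ∑ j ∈ T, (F j).card :=
    (Finset.sum_sdiff (T.subset_univ)).symm
  have hTsum : ∑ j ∈ T, (F j).card = 2 * T.card := by
    rw [Finset.sum_congr rfl (fun j hj => by
      rw [hT, Finset.mem_filter] at hj; exact hj.2 : ∀ j ∈ T, (F j).card = 2)]
    simp [mul_comm]
  have hrest : ∑ j ∈ Finset.univ \ T, (F j).card ≤ (Finset.univ \ T).card * 1 := by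
    refine Finset.sum_le_card_nsmul _ _ 1 fun j hj => ?_
    rw [Finset.mem_sdiff, hT, Finset.mem_filter] at hj
    have h1 := hcard2 j
    have h2 : ¬(F j).card = 2 := fun h => hj.2 ⟨Finset.mem_univ j, h⟩
    omega
  have hcards : (Finset.univ \ T).card = m - T.card := by
    rw [Finset.card_sdiff_of_subset (T.subset_univ), Finset.card_univ, Fintype.card_fin]
  have hm : (Finset.univ : Finset (Fin m)).card = m := by simp
  have hTle : T.card ≤ (Finset.univ : Finset (Fin m)).card := Finset.card_le_univ T
  omega

/-- k disjoint 5-cycles on Fin N, N = 5k -/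
def H0 (N : ℕ) : SimpleGraph (Fin N) := SimpleGraph.fromRel
  (fun a b => (a : ℕ) / 5 = (b : ℕ) / 5 ∧ ((a : ℕ) % 5 + 1) % 5 = (b : ℕ) % 5)

/-- one big cycle on Fin N -/
def CN (N : ℕ) : SimpleGraph (Fin N) := SimpleGraph.fromRel
  (fun a b => (b : ℕ) = (a : ℕ) + 1 ∨ ((a : ℕ) = N - 1 ∧ (b : ℕ) = 0))

lemma H0_nbrs {N k : ℕ} (hN : N = 5 * k) (v : Fin N) :
    ∃ a b : Fin N, a ≠ b ∧ {w | (H0 N).Adj v w} = {a, b} := by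
  have hv := v.isLt
  refine ⟨⟨5 * ((v : ℕ) / 5) + ((v : ℕ) % 5 + 1) % 5, by omega⟩,
    ⟨5 * ((v : ℕ) / 5) + ((v : ℕ) % 5 + 4) % 5, by omega⟩, ?_, ?_⟩
  · simp only [ne_eq, Fin.mk.injEq]
    omega
  · ext w
    have hw := w.isLt
    simp only [Set.mem_setOf_eq, H0, SimpleGraph.fromRel_adj, Set.mem_insert_iff,
      Set.mem_singleton_iff, Fin.ext_iff, ne_eq]
    omega

lemma H0_degN {N k : ℕ} (hN : N = 5 * k) (v : Fin N) : (H0 N).degN v = 2 := by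
  obtain ⟨a, b, hab, hset⟩ := H0_nbrs hN v
  rw [SimpleGraph.degN, hset, Set.ncard_pair hab]

lemma CN_nbrs {N : ℕ} (h5 : 5 ≤ N) (v : Fin N) :
    ∃ a b : Fin N, a ≠ b ∧ {w | (CN N).Adj v w} = {a, b} := by
  have hv := v.isLt
  obtain ⟨a, ha⟩ : ∃ a : Fin N, (a : ℕ) = if (v : ℕ) + 1 < N then (v : ℕ) + 1 else 0 := by
    split
    · exact ⟨⟨(v : ℕ) + 1, by omega⟩, rfl⟩
    · exact ⟨⟨0, by omega⟩, rfl⟩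
  obtain ⟨b, hb⟩ : ∃ b : Fin N, (b : ℕ) = if (v : ℕ) = 0 then N - 1 else (v : ℕ) - 1 := by
    split
    · exact ⟨⟨N - 1, by omega⟩, rfl⟩
    · exact ⟨⟨(v : ℕ) - 1, by omega⟩, rfl⟩
  refine ⟨a, b, ?_, ?_⟩
  · simp only [ne_eq, Fin.ext_iff]
    split_ifs at ha hb <;> omega
  · ext w
    have hw := w.isLt
    simp only [Set.mem_setOf_eq, CN, SimpleGraph.fromRel_adj, Set.mem_insert_iff,
      Set.mem_singleton_iff, Fin.ext_iff, ne_eq]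
    split_ifs at ha hb <;> omega

lemma CN_degN {N : ℕ} (h5 : 5 ≤ N) (v : Fin N) : (CN N).degN v = 2 := by
  obtain ⟨a, b, hab, hset⟩ := CN_nbrs h5 v
  rw [SimpleGraph.degN, hset, Set.ncard_pair hab]

lemma compl_two_of_deg {N : ℕ} (h5 : 5 ≤ N) (G : SimpleGraph (Fin N))
    (hdeg : ∀ v, G.degN v = N - 3) (v : Fin N) : Gᶜ.degN v = 2 := by
  rw [degN_compl, hdeg, Fintype.card_fin]
  omega

lemma chromNum_le {N k : ℕ} (hN : N = 5 * k) (hk : 1 ≤ k) (G : SimpleGraph (Fin N))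
    (hdeg : ∀ v, G.degN v = N - 3) : G.chromNum ≤ 3 * k := by
  classical
  have hcol : G.Colorable (3 * k) := colorable_of_compl G
    (compl_two_of_deg (by omega) G hdeg) (3 * k) (by rw [Fintype.card_fin]; omega)
  have h := SimpleGraph.chromaticNumber_le_iff_colorable.mpr hcol
  rw [SimpleGraph.chromNum]
  calc G.chromaticNumber.toNat ≤ ((3 * k : ℕ) : ℕ∞).toNat :=
        ENat.toNat_le_toNat h (ENat.coe_ne_top _)
    _ = 3 * k := ENat.toNat_coe _

lemma chromNum_G0 {N k : ℕ} (hN : N = 5 * k) (hk : 1 ≤ k) :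
    ((H0 N)ᶜ).chromNum = 3 * k ∧ ∀ v, ((H0 N)ᶜ).degN v = N - 3 := by
  classical
  have hdeg : ∀ v, ((H0 N)ᶜ).degN v = N - 3 := by
    intro v
    rw [degN_compl, Fintype.card_fin, H0_degN hN]
    omega
  refine ⟨?_, hdeg⟩
  have hcol : ((H0 N)ᶜ).Colorable (3 * k) := colorable_of_compl _
    (by intro v; rw [compl_compl]; exact H0_degN hN v) (3 * k)
    (by rw [Fintype.card_fin]; omega)
  have h1 : ((H0 N)ᶜ).chromaticNumber ≤ ((3 * k : ℕ) : ℕ∞) :=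
    SimpleGraph.chromaticNumber_le_iff_colorable.mpr hcol
  have hadj_of : ∀ a b : Fin N, a ≠ b → ¬((H0 N)ᶜ).Adj a b → (H0 N).Adj a b := by
    intro a b hne hna
    by_contra h
    exact hna (((H0 N).compl_adj a b).mpr ⟨hne, h⟩)
  have hval : ∀ a b : Fin N, (H0 N).Adj a b →
      ((a : ℕ) / 5 = (b : ℕ) / 5 ∧ ((a : ℕ) % 5 + 1) % 5 = (b : ℕ) % 5) ∨
      ((b : ℕ) / 5 = (a : ℕ) / 5 ∧ ((b : ℕ) % 5 + 1) % 5 = (a : ℕ) % 5) := by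
    intro a b h
    rw [H0, SimpleGraph.fromRel_adj] at h
    exact h.2
  have hge : ((3 * k : ℕ) : ℕ∞) ≤ ((H0 N)ᶜ).chromaticNumber := by
    rw [SimpleGraph.chromaticNumber]
    refine le_iInf₂ fun n hn => ?_
    have hlb : 3 * k ≤ n := by
      refine coloring_lb hN ((H0 N)ᶜ) ?_ ?_ hn.some
      · intro a b hne hna
        rcases hval a b (hadj_of a b hne hna) with ⟨h, _⟩ | ⟨h, _⟩
        · exact h
        · exact h.symm
      · intro a b c hab hac hbc h1' h2' h3'
        have r1 := hval a b (hadj_of a b hab h1')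
        have r2 := hval a c (hadj_of a c hac h2')
        have r3 := hval b c (hadj_of b c hbc h3')
        omega
    exact_mod_cast hlb
  have heq : ((H0 N)ᶜ).chromaticNumber = ((3 * k : ℕ) : ℕ∞) := le_antisymm h1 hge
  rw [SimpleGraph.chromNum, heq]
  exact ENat.toNat_coe _

lemma cliqueNum_le {N k : ℕ} (hN : N = 5 * k) (hk : 1 ≤ k) (G : SimpleGraph (Fin N))
    (hdeg : ∀ v, G.degN v = N - 3) : G.cliqueNum ≤ 5 * k / 2 := by
  classical
  have h2 := compl_two_of_deg (show 5 ≤ N by omega) G hdeg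
  rw [SimpleGraph.cliqueNum]
  refine csSup_le ⟨0, ∅, SimpleGraph.isNClique_empty.mpr rfl⟩ ?_
  rintro n ⟨s, hs⟩
  have h := clique_card_le G h2 s hs.isClique
  rw [Fintype.card_fin] at h
  have hc := hs.card_eq
  omega

lemma cliqueNum_G1 {N k : ℕ} (hN : N = 5 * k) (hk : 1 ≤ k) :
    ((CN N)ᶜ).cliqueNum = 5 * k / 2 ∧ ∀ v, ((CN N)ᶜ).degN v = N - 3 := by
  classical
  have h5 : 5 ≤ N := by omega
  have hdeg : ∀ v, ((CN N)ᶜ).degN v = N - 3 := by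
    intro v
    rw [degN_compl, Fintype.card_fin, CN_degN h5]
    omega
  refine ⟨?_, hdeg⟩
  refine le_antisymm (cliqueNum_le hN hk _ hdeg) ?_
  -- construct the even clique
  have hemb : ∀ i : Fin (N / 2), 2 * (i : ℕ) < N := by
    intro i
    have := i.isLt
    omega
  set s : Finset (Fin N) := Finset.univ.map
    ⟨fun i : Fin (N / 2) => ⟨2 * (i : ℕ), hemb i⟩, by
      intro i j h
      simp only [Fin.mk.injEq] at h
      exact Fin.ext (by omega)⟩ with hsdef
  have hclique : ((CN N)ᶜ).IsNClique (5 * k / 2) s := by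
    constructor
    · intro a ha b hb hne
      rw [Finset.mem_coe, hsdef, Finset.mem_map] at ha hb
      obtain ⟨i, _, rfl⟩ := ha
      obtain ⟨j, _, rfl⟩ := hb
      refine ((CN N).compl_adj _ _).mpr ⟨hne, ?_⟩
      rw [CN, SimpleGraph.fromRel_adj]
      rintro ⟨-, hrel⟩
      have hij : (2 * (i : ℕ) : ℕ) ≠ 2 * (j : ℕ) := by
        intro h
        exact hne (Fin.ext h)
      have hi := i.isLt
      have hj := j.isLt
      replace hrel : (2 * (j : ℕ) = 2 * (i : ℕ) + 1 ∨ (2 * (i : ℕ) = N - 1 ∧ 2 * (j : ℕ) = 0)) ∨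
          (2 * (i : ℕ) = 2 * (j : ℕ) + 1 ∨ (2 * (j : ℕ) = N - 1 ∧ 2 * (i : ℕ) = 0)) := hrel
      omega
    · rw [hsdef, Finset.card_map, Finset.card_univ, Fintype.card_fin]
      omega
  have hbdd : BddAbove {n | ∃ s, ((CN N)ᶜ).IsNClique n s} := by
    refine ⟨N, ?_⟩
    rintro n ⟨t, ht⟩
    have := ht.card_eq
    have hle : t.card ≤ N := by
      have h' := Finset.card_le_univ t
      rwa [Fintype.card_fin] at h'
    omega
  exact le_csSup hbdd ⟨s, hclique⟩

end ChiOmega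

theorem chi_omega_of_constant_sequence (k : ℕ) (hk : 1 ≤ k) :
    sSup {c | ∃ G : SimpleGraph (Fin (5 * k)),
        (∀ v, G.degN v = 5 * k - 3) ∧ c = G.chromNum} = 3 * k ∧
    sSup {c | ∃ G : SimpleGraph (Fin (5 * k)),
        (∀ v, G.degN v = 5 * k - 3) ∧ c = G.cliqueNum} = 5 * k / 2 := by
  obtain ⟨hchrom0, hdeg0⟩ := ChiOmega.chromNum_G0 (N := 5 * k) rfl hk
  obtain ⟨hclique1, hdeg1⟩ := ChiOmega.cliqueNum_G1 (N := 5 * k) rfl hk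
  constructor
  · have hub : ∀ c ∈ {c | ∃ G : SimpleGraph (Fin (5 * k)),
        (∀ v, G.degN v = 5 * k - 3) ∧ c = G.chromNum}, c ≤ 3 * k := by
      rintro c ⟨G, hdeg, rfl⟩
      exact ChiOmega.chromNum_le rfl hk G hdeg
    have hmem : 3 * k ∈ {c | ∃ G : SimpleGraph (Fin (5 * k)),
        (∀ v, G.degN v = 5 * k - 3) ∧ c = G.chromNum} :=
      ⟨(ChiOmega.H0 (5 * k))ᶜ, hdeg0, hchrom0.symm⟩
    exact le_antisymm (csSup_le ⟨3 * k, hmem⟩ hub) (le_csSup ⟨3 * k, hub⟩ hmem)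
  · have hub : ∀ c ∈ {c | ∃ G : SimpleGraph (Fin (5 * k)),
        (∀ v, G.degN v = 5 * k - 3) ∧ c = G.cliqueNum}, c ≤ 5 * k / 2 := by
      rintro c ⟨G, hdeg, rfl⟩
      exact ChiOmega.cliqueNum_le rfl hk G hdeg
    have hmem : 5 * k / 2 ∈ {c | ∃ G : SimpleGraph (Fin (5 * k)),
        (∀ v, G.degN v = 5 * k - 3) ∧ c = G.cliqueNum} :=
      ⟨(ChiOmega.CN (5 * k))ᶜ, hdeg1, hclique1.symm⟩
    exact le_antisymm (csSup_le ⟨5 * k / 2, hmem⟩ hub) (le_csSup ⟨5 * k / 2, hub⟩ hmem)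
end

section
/- For any two simple graphs G_1 and G_2, h_1(G_1 + G_2) ≥ h_1(G_1) + h_1(G_2), where G_1 + G_2 is the join and h_1(G) is the largest r such that G contains a subgraph obtained from K_r by choosing vertex-disjoint star subgraphs of K_r and subdividing each edge of these stars exactly once. -/
open SimpleGraph

/-- `G` contains a subgraph obtained from `K_r` by choosing vertex-disjoint star
subgraphs of `K_r` and subdividing each edge of these stars exactly once. -/
def SimpleGraph.HasStarSubdivK {V : Type*} (G : SimpleGraph V) (r : ℕ) : Prop :=
  ∃ (b : Fin r → V) (a : ℕ) (c : Fin a → Fin r) (L : Fin a → Finset (Fin r))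
    (w : (t : Fin a) → (x : Fin r) → x ∈ L t → V),
    Function.Injective b ∧
    (∀ t, c t ∉ L t) ∧
    (∀ t t', t ≠ t' → Disjoint (insert (c t) (L t)) (insert (c t') (L t'))) ∧
    (∀ t x hx, w t x hx ∉ Set.range b) ∧
    (∀ t x hx t' x' hx', w t x hx = w t' x' hx' → t = t' ∧ x = x') ∧
    (∀ t x hx, G.Adj (b (c t)) (w t x hx) ∧ G.Adj (w t x hx) (b x)) ∧
    (∀ i j : Fin r, i ≠ j →
      (∀ t, ¬ ((i = c t ∧ j ∈ L t) ∨ (j = c t ∧ i ∈ L t))) → G.Adj (b i) (b j))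

/-- `h₁(G)`: the largest `r` such that `G` contains a star-subdivided `K_r`. -/
noncomputable def h1G {V : Type*} (G : SimpleGraph V) : ℕ :=
  sSup {r | G.HasStarSubdivK r}

/-- The join of two graphs. -/
def joinG {V₁ V₂ : Type*} (G₁ : SimpleGraph V₁) (G₂ : SimpleGraph V₂) :
    SimpleGraph (V₁ ⊕ V₂) :=
  SimpleGraph.fromRel (fun u v =>
    match u, v with
    | .inl a, .inl b => G₁.Adj a b
    | .inr a, .inr b => G₂.Adj a b
    | _, _ => True)

section Aux

variable {V₁ V₂ : Type*} {G₁ : SimpleGraph V₁} {G₂ : SimpleGraph V₂}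

lemma joinG_adj_ll {a b : V₁} : (joinG G₁ G₂).Adj (.inl a) (.inl b) ↔ G₁.Adj a b := by
  constructor
  · rintro ⟨h, h' | h'⟩
    · exact h'
    · exact h'.symm
  · exact fun h => ⟨by simp [h.ne], Or.inl h⟩

lemma joinG_adj_rr {a b : V₂} : (joinG G₁ G₂).Adj (.inr a) (.inr b) ↔ G₂.Adj a b := by
  constructor
  · rintro ⟨h, h' | h'⟩
    · exact h'
    · exact h'.symm
  · exact fun h => ⟨by simp [h.ne], Or.inl h⟩

lemma joinG_adj_lr {a : V₁} {b : V₂} : (joinG G₁ G₂).Adj (.inl a) (.inr b) :=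
  ⟨by simp, Or.inl trivial⟩

lemma joinG_adj_rl {a : V₂} {b : V₁} : (joinG G₁ G₂).Adj (.inr a) (.inl b) :=
  ⟨by simp, Or.inl trivial⟩

/-- A version of `HasStarSubdivK` with arbitrary index types. -/
def hasStarSubdivOn {V : Type*} (G : SimpleGraph V) (ι κ : Type) [DecidableEq ι] : Prop :=
  ∃ (b : ι → V) (c : κ → ι) (L : κ → Finset ι)
    (w : (t : κ) → (x : ι) → x ∈ L t → V),
    Function.Injective b ∧
    (∀ t, c t ∉ L t) ∧
    (∀ t t', t ≠ t' → Disjoint (insert (c t) (L t)) (insert (c t') (L t'))) ∧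
    (∀ t x hx, w t x hx ∉ Set.range b) ∧
    (∀ t x hx t' x' hx', w t x hx = w t' x' hx' → t = t' ∧ x = x') ∧
    (∀ t x hx, G.Adj (b (c t)) (w t x hx) ∧ G.Adj (w t x hx) (b x)) ∧
    (∀ i j : ι, i ≠ j →
      (∀ t, ¬ ((i = c t ∧ j ∈ L t) ∨ (j = c t ∧ i ∈ L t))) → G.Adj (b i) (b j))

lemma hasStarSubdivOn_reindex {V : Type*} (G : SimpleGraph V) {ι κ ι' κ' : Type}
    [DecidableEq ι] [DecidableEq ι']
    (σ : ι' ≃ ι) (τ : κ' ≃ κ) (h : hasStarSubdivOn G ι κ) : hasStarSubdivOn G ι' κ' := by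
  obtain ⟨b, c, L, w, hb, hc, hd, hr, hi, ha, hK⟩ := h
  refine ⟨b ∘ σ, fun t => σ.symm (c (τ t)), fun t => (L (τ t)).map σ.symm.toEmbedding,
    fun t x hx => w (τ t) (σ x) (by simpa [Finset.mem_map_equiv] using hx),
    hb.comp σ.injective, ?_, ?_, ?_, ?_, ?_, ?_⟩
  · intro t ht
    exact hc (τ t) (by simpa [Finset.mem_map_equiv] using ht)
  · intro t t' htt'
    have h1 : ∀ s : κ, insert (σ.symm (c s)) ((L s).map σ.symm.toEmbedding)
        = (insert (c s) (L s)).map σ.symm.toEmbedding := by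
      intro s; simp [Finset.map_insert]
    rw [h1, h1, Finset.disjoint_map]
    exact hd (τ t) (τ t') (fun hh => htt' (τ.injective hh))
  · intro t x hx hmem
    obtain ⟨i, hi'⟩ := hmem
    exact hr (τ t) (σ x) _ ⟨σ i, by simpa using hi'⟩
  · intro t x hx t' x' hx' heq
    obtain ⟨h1, h2⟩ := hi _ _ _ _ _ _ heq
    exact ⟨τ.injective h1, σ.injective h2⟩
  · intro t x hx
    have := ha (τ t) (σ x) (by simpa [Finset.mem_map_equiv] using hx)
    simpa using this
  · intro i j hij hcond
    have : G.Adj (b (σ i)) (b (σ j)) := by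
      refine hK (σ i) (σ j) (fun hh => hij (σ.injective hh)) ?_
      intro t
      have := hcond (τ.symm t)
      simp only [Equiv.apply_symm_apply, Finset.mem_map_equiv, Equiv.symm_symm] at this
      intro hcontra
      apply this
      rcases hcontra with ⟨h1, h2⟩ | ⟨h1, h2⟩
      · exact Or.inl ⟨by rw [← h1]; simp, by simpa using h2⟩
      · exact Or.inr ⟨by rw [← h1]; simp, by simpa using h2⟩
    simpa using this

lemma hasStarSubdivOn_join {ι₁ κ₁ ι₂ κ₂ : Type} [DecidableEq ι₁] [DecidableEq ι₂]
    (h₁ : hasStarSubdivOn G₁ ι₁ κ₁) (h₂ : hasStarSubdivOn G₂ ι₂ κ₂) :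
    hasStarSubdivOn (joinG G₁ G₂) (ι₁ ⊕ ι₂) (κ₁ ⊕ κ₂) := by
  classical
  obtain ⟨b₁, c₁, L₁, w₁, hb₁, hc₁, hd₁, hr₁, hi₁, ha₁, hK₁⟩ := h₁
  obtain ⟨b₂, c₂, L₂, w₂, hb₂, hc₂, hd₂, hr₂, hi₂, ha₂, hK₂⟩ := h₂
  refine ⟨Sum.elim (Sum.inl ∘ b₁) (Sum.inr ∘ b₂), Sum.map c₁ c₂,
    Sum.elim (fun t₁ => (L₁ t₁).map .inl) (fun t₂ => (L₂ t₂).map .inr),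
    fun t => match t with
    | Sum.inl t₁ => fun x => match x with
      | Sum.inl x₁ => fun hx => Sum.inl (w₁ t₁ x₁ (by simpa using hx))
      | Sum.inr x₂ => fun hx => absurd hx (by simp)
    | Sum.inr t₂ => fun x => match x with
      | Sum.inl x₁ => fun hx => absurd hx (by simp)
      | Sum.inr x₂ => fun hx => Sum.inr (w₂ t₂ x₂ (by simpa using hx)),
    ?_, ?_, ?_, ?_, ?_, ?_, ?_⟩
  · rintro (i | i) (j | j) h <;> simp at h
    · exact congrArg _ (hb₁ h)
    · exact congrArg _ (hb₂ h)
  · rintro (t | t) ht <;> simp at ht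
    · exact hc₁ t ht
    · exact hc₂ t ht
  · rintro (t | t) (t' | t') htt'
    · have h1 : ∀ s, insert (Sum.map c₁ c₂ (Sum.inl s))
          ((Sum.elim (fun t₁ => (L₁ t₁).map (.inl : ι₁ ↪ ι₁ ⊕ ι₂))
            (fun t₂ => (L₂ t₂).map .inr)) (Sum.inl s))
          = (insert (c₁ s) (L₁ s)).map (.inl : ι₁ ↪ ι₁ ⊕ ι₂) := by
        intro s; simp [Finset.map_insert]
      rw [h1, h1, Finset.disjoint_map]
      exact hd₁ t t' (by simpa using htt')
    · rw [Finset.disjoint_left]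
      rintro (x | x) hx hx' <;> simp at hx hx'
    · rw [Finset.disjoint_left]
      rintro (x | x) hx hx' <;> simp at hx hx'
    · have h1 : ∀ s, insert (Sum.map c₁ c₂ (Sum.inr s))
          ((Sum.elim (fun t₁ => (L₁ t₁).map (.inl : ι₁ ↪ ι₁ ⊕ ι₂))
            (fun t₂ => (L₂ t₂).map .inr)) (Sum.inr s))
          = (insert (c₂ s) (L₂ s)).map (.inr : ι₂ ↪ ι₁ ⊕ ι₂) := by
        intro s; simp [Finset.map_insert]
      rw [h1, h1, Finset.disjoint_map]
      exact hd₂ t t' (by simpa using htt')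
  · rintro (t | t) (x | x) hx ⟨(i | i), hi'⟩ <;> simp at hx hi' ⊢
    · exact hr₁ t x (by simpa using hx) ⟨i, hi'⟩
    · exact hr₂ t x (by simpa using hx) ⟨i, hi'⟩
  · rintro (t | t) (x | x) hx (t' | t') (x' | x') hx' heq <;> simp at hx hx' heq
    · obtain ⟨h1, h2⟩ := hi₁ _ _ _ _ _ _ heq
      simp [h1, h2]
    · obtain ⟨h1, h2⟩ := hi₂ _ _ _ _ _ _ heq
      simp [h1, h2]
  · rintro (t | t) (x | x) hx <;> simp at hx ⊢
    · exact ⟨joinG_adj_ll.mpr (ha₁ t x (by simpa using hx)).1,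
        joinG_adj_ll.mpr (ha₁ t x (by simpa using hx)).2⟩
    · exact ⟨joinG_adj_rr.mpr (ha₂ t x (by simpa using hx)).1,
        joinG_adj_rr.mpr (ha₂ t x (by simpa using hx)).2⟩
  · rintro (i | i) (j | j) hij hcond
    · refine joinG_adj_ll.mpr (hK₁ i j (by simpa using hij) ?_)
      intro t hcontra
      apply hcond (Sum.inl t)
      rcases hcontra with ⟨h1, h2⟩ | ⟨h1, h2⟩
      · exact Or.inl ⟨by simp [h1], by simpa using h2⟩
      · exact Or.inr ⟨by simp [h1], by simpa using h2⟩
    · exact joinG_adj_lr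
    · exact joinG_adj_rl
    · refine joinG_adj_rr.mpr (hK₂ i j (by simpa using hij) ?_)
      intro t hcontra
      apply hcond (Sum.inr t)
      rcases hcontra with ⟨h1, h2⟩ | ⟨h1, h2⟩
      · exact Or.inl ⟨by simp [h1], by simpa using h2⟩
      · exact Or.inr ⟨by simp [h1], by simpa using h2⟩

lemma hasStarSubdivK_iff {V : Type*} {G : SimpleGraph V} {r : ℕ} :
    G.HasStarSubdivK r ↔ ∃ a, hasStarSubdivOn G (Fin r) (Fin a) := by
  constructor
  · rintro ⟨b, a, c, L, w, hs⟩
    exact ⟨a, b, c, L, w, hs⟩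
  · rintro ⟨a, b, c, L, w, hs⟩
    exact ⟨b, a, c, L, w, hs⟩

lemma hasStarSubdivK_zero {V : Type*} (G : SimpleGraph V) : G.HasStarSubdivK 0 :=
  ⟨Fin.elim0, 0, Fin.elim0, Fin.elim0, fun t => t.elim0,
    fun i => i.elim0, fun t => t.elim0, fun t => t.elim0, fun t => t.elim0,
    fun t => t.elim0, fun t => t.elim0, fun i => i.elim0⟩

lemma hasStarSubdivK_le {V : Type*} [Fintype V] {G : SimpleGraph V} {r : ℕ}
    (h : G.HasStarSubdivK r) : r ≤ Fintype.card V := by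
  obtain ⟨b, _, _, _, _, hb, _⟩ := h
  simpa using Fintype.card_le_of_injective b hb

end Aux

theorem h1_superadditive_join {V₁ V₂ : Type*} [Fintype V₁] [Fintype V₂]
    (G₁ : SimpleGraph V₁) (G₂ : SimpleGraph V₂) :
    h1G G₁ + h1G G₂ ≤ h1G (joinG G₁ G₂) := by
  have hbd₁ : BddAbove {r | G₁.HasStarSubdivK r} :=
    ⟨Fintype.card V₁, fun r hr => hasStarSubdivK_le hr⟩
  have hbd₂ : BddAbove {r | G₂.HasStarSubdivK r} :=
    ⟨Fintype.card V₂, fun r hr => hasStarSubdivK_le hr⟩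
  have hne₁ : (0 : ℕ) ∈ {r | G₁.HasStarSubdivK r} := hasStarSubdivK_zero G₁
  have hne₂ : (0 : ℕ) ∈ {r | G₂.HasStarSubdivK r} := hasStarSubdivK_zero G₂
  have hm₁ : G₁.HasStarSubdivK (h1G G₁) := Nat.sSup_mem ⟨0, hne₁⟩ hbd₁
  have hm₂ : G₂.HasStarSubdivK (h1G G₂) := Nat.sSup_mem ⟨0, hne₂⟩ hbd₂
  obtain ⟨a₁, hOn₁⟩ := hasStarSubdivK_iff.mp hm₁
  obtain ⟨a₂, hOn₂⟩ := hasStarSubdivK_iff.mp hm₂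
  have hjoin : (joinG G₁ G₂).HasStarSubdivK (h1G G₁ + h1G G₂) := by
    refine hasStarSubdivK_iff.mpr ⟨a₁ + a₂, ?_⟩
    exact hasStarSubdivOn_reindex _ finSumFinEquiv.symm finSumFinEquiv.symm
      (hasStarSubdivOn_join hOn₁ hOn₂)
  have hbdj : BddAbove {r | (joinG G₁ G₂).HasStarSubdivK r} :=
    ⟨Fintype.card (V₁ ⊕ V₂), fun r hr => hasStarSubdivK_le hr⟩
  exact le_csSup hbdj hjoin
end
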